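/- arXiv:2005.09105 — 10 statements merged into one kernel-verified Lean document; each statement's English description precedes it below -/
import Mathlib

section
/- Let E be a real inner product space and let x₁, x₂, x₃, x₄ ∈ ℝ × E be four points whose first (time) coordinates satisfy τ₁ > τ₂ > τ₃ > τ₄. Write x_{ij}² := ‖x_i − x_j‖² for the squared Euclidean distance, and define the cross-ratios u = x₁₂² x₃₄² / (x₁₃² x₂₄²) and v = x₁₄² x₂₃² / (x₁₃² x₂₄²). Then the quadratic polynomial w² − (1 + u − v)·w + u has no real root w with w ≥ 1. -/
/-!
With the Euclidean distances `x_{ij}` of `ℝ × E` put `p = x₁₂ x₃₄ / (x₁₃ x₂₄)` and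
`q = x₁₄ x₂₃ / (x₁₃ x₂₄)`, so that `u = p²` and `v = q²`. The time ordering makes Ptolemy's
inequality `p ≤ q + 1` strict: inverting about `x₁`, the half-space `{τ ≤ max(τ₃, τ₄) - τ₁}`
goes to a convex set containing the images of `x₃, x₄` but not that of `x₂`, so the image of
`x₂` is off the segment joining the other two and the triangle inequality behind Ptolemy's is
strict. Finally `w² - (1 + p² - q²) w + p²` is positive for `w ≥ 1` as soon as `p < q + 1`
and `q > 0`.
-/

open EuclideanGeometry

section Ptolemy

variable {F : Type*} [NormedAddCommGroup F] [InnerProductSpace ℝ F]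

lemma convex_setOf_le_mul_norm_sub_sq (f : F →ₗ[ℝ] ℝ) {ℓ : ℝ} (hℓ : ℓ ≤ 0) (a : F) :
    Convex ℝ {p : F | f (p - a) ≤ ℓ * ‖p - a‖ ^ 2} := by
  have hg : ConvexOn ℝ Set.univ fun p : F => f p + (-ℓ) • ‖p‖ ^ 2 :=
    (f.convexOn convex_univ).add <|
      (convexOn_univ_norm.pow (fun p _ => norm_nonneg p) 2).smul (neg_nonneg.2 hℓ)
  convert (hg.translate_right (-a)).convex_le 0 using 1
  ext p
  simp only [Set.preimage_univ, Set.mem_univ, true_and, Function.comp_apply, ← sub_eq_neg_add,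
    smul_eq_mul, Set.mem_ofPred_eq]
  constructor <;> intro h <;> linarith

lemma le_mul_norm_inversion_sub_sq_iff (f : F →ₗ[ℝ] ℝ) (ℓ : ℝ) {a x : F} (hx : x ≠ a) :
    f (inversion a 1 x - a) ≤ ℓ * ‖inversion a 1 x - a‖ ^ 2 ↔ f (x - a) ≤ ℓ := by
  have hpos : 0 < ‖x - a‖ := norm_pos_iff.2 (sub_ne_zero.2 hx)
  rw [← vsub_eq_sub, inversion_vsub_center, vsub_eq_sub, map_smul, norm_smul, dist_eq_norm,
    Real.norm_of_nonneg (by positivity), smul_eq_mul, mul_pow]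
  field_simp

theorem mul_dist_lt_mul_dist_add_mul_dist_of_lt (f : F →ₗ[ℝ] ℝ) {a b c d : F}
    (hca : f c < f a) (hbc : f b < f c) (hdc : f d < f c) :
    dist a c * dist b d < dist a b * dist c d + dist b c * dist a d := by
  have hb : b ≠ a := by rintro rfl; linarith
  have hc : c ≠ a := by rintro rfl; linarith
  have hd : d ≠ a := by rintro rfl; linarith
  set ℓ := max (f (b - a)) (f (d - a))
  have hℓc : ℓ < f (c - a) := by
    simp only [ℓ, max_lt_iff, map_sub]
    constructor <;> linarith
  have hℓ : ℓ ≤ 0 := by rw [map_sub] at hℓc; linarith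
  let S := {p : F | f (p - a) ≤ ℓ * ‖p - a‖ ^ 2}
  have hmem {x : F} (hx : x ≠ a) : inversion a 1 x ∈ S ↔ f (x - a) ≤ ℓ :=
    le_mul_norm_inversion_sub_sq_iff f ℓ hx
  have hnot : ¬ Wbtw ℝ (inversion a 1 b) (inversion a 1 c) (inversion a 1 d) := fun h =>
    hℓc.not_ge <| (hmem hc).1 <|
      (convex_setOf_le_mul_norm_sub_sq f hℓ a).segment_subset
        ((hmem hb).2 (le_max_left _ _)) ((hmem hd).2 (le_max_right _ _)) h.mem_segment
  have H : dist (inversion a 1 b) (inversion a 1 d) <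
      dist (inversion a 1 b) (inversion a 1 c) + dist (inversion a 1 c) (inversion a 1 d) :=
    (dist_triangle _ _ _).lt_of_ne fun h => hnot (dist_add_dist_eq_iff.1 h.symm)
  rw [dist_inversion_inversion hb hd, dist_inversion_inversion hb hc,
    dist_inversion_inversion hc hd, one_pow] at H
  rw [← dist_pos] at hb hc hd
  field_simp at H
  rw [dist_comm b a, dist_comm c a, dist_comm d a] at H
  linarith

end Ptolemy

lemma quadratic_pos_of_lt_add_one {p q w : ℝ} (hp : 0 ≤ p) (hq : 0 < q) (hpq : p < q + 1)
    (hw : 1 ≤ w) : 0 < w ^ 2 - (1 + p ^ 2 - q ^ 2) * w + p ^ 2 := by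
  rcases le_or_gt p 1 with hp1 | hp1
  · have hwp : p ^ 2 ≤ w := by nlinarith
    nlinarith [mul_nonneg (sub_nonneg.2 hw) (sub_nonneg.2 hwp), mul_pos hq hq]
  · have : (p - 1) ^ 2 < q ^ 2 := by nlinarith
    nlinarith [sq_nonneg (w - p)]

/-- For a Euclidean four-point configuration in `ℝ × E` with strictly decreasing
time coordinates, the cross-ratio variables `z, z̄` (the roots of
`w² - (1+u-v)w + u`) do not lie in `[1, +∞)`. -/
theorem stmt_1 {E : Type*} [NormedAddCommGroup E] [InnerProductSpace ℝ E]
    (τ : Fin 4 → ℝ) (y : Fin 4 → E)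
    (h12 : τ 0 > τ 1) (h23 : τ 1 > τ 2) (h34 : τ 2 > τ 3) :
    let d : Fin 4 → Fin 4 → ℝ := fun i j => (τ i - τ j) ^ 2 + ‖y i - y j‖ ^ 2
    let u : ℝ := d 0 1 * d 2 3 / (d 0 2 * d 1 3)
    let v : ℝ := d 0 3 * d 1 2 / (d 0 2 * d 1 3)
    ∀ w : ℝ, 1 ≤ w → w ^ 2 - (1 + u - v) * w + u ≠ 0 := by
  intro d u v w hw
  let X : Fin 4 → WithLp 2 (ℝ × E) := fun i => WithLp.toLp 2 (τ i, y i)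
  let time := WithLp.fstₗ 2 ℝ ℝ E
  have hd : ∀ i j, d i j = dist (X i) (X j) ^ 2 := fun i j => by
    rw [WithLp.prod_dist_eq_of_L2, Real.sq_sqrt (by positivity)]
    simp [X, d, sq_abs, dist_eq_norm]
  have hdist : ∀ {i j}, τ j < τ i → 0 < dist (X i) (X j) := fun h =>
    dist_pos.2 fun hX => h.ne' (congrArg time hX)
  have hptolemy : dist (X 0) (X 1) * dist (X 2) (X 3) <
      dist (X 0) (X 2) * dist (X 1) (X 3) + dist (X 2) (X 1) * dist (X 0) (X 3) :=
    mul_dist_lt_mul_dist_add_mul_dist_of_lt time h12 h23 (h34.trans h23)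
  set C := dist (X 0) (X 2) * dist (X 1) (X 3)
  set p := dist (X 0) (X 1) * dist (X 2) (X 3) / C
  set q := dist (X 0) (X 3) * dist (X 1) (X 2) / C
  have hC : 0 < C := mul_pos (hdist (h23.trans h12)) (hdist (h34.trans h23))
  have hu : u = p ^ 2 := by simp only [u, p, C, hd]; ring
  have hv : v = q ^ 2 := by simp only [v, q, C, hd]; ring
  have hq : 0 < q := div_pos (mul_pos (hdist (h34.trans (h23.trans h12))) (hdist h23)) hC
  have hpq : p < q + 1 := by
    rw [div_lt_iff₀ hC, add_mul, div_mul_cancel₀ _ hC.ne', one_mul, dist_comm (X 1)]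
    linarith
  rw [hu, hv]
  exact (quadratic_pos_of_lt_add_one (by positivity) hq hpq hw).ne'
end

section
/- Let z₁, z₂, z₃, z₄ ∈ ℂ satisfy Re z₁ > Re z₂ > Re z₃ > Re z₄. Then (z₁ − z₃)(z₂ − z₄) ≠ 0, and the cross-ratio z = (z₁ − z₂)(z₃ − z₄) / ((z₁ − z₃)(z₂ − z₄)) satisfies z ∉ {0} ∪ [1, +∞). -/
/-!
With `a = z₁ - z₂`, `b = z₂ - z₃`, `c = z₃ - z₄` in the open right half-plane, the cross-ratio is
`a c / ((a + b)(b + c))`. Put `p = (a + c)/2`, `q = (a - c)/2` and `m = b + p`; if the cross-ratio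
were `t ≥ 1`, then `m² = t⁻¹ p² + (1 - t⁻¹) q²` would be a convex combination of `p²` and `q²`.
The squares of the strip `|Re w| ≤ r` fill the convex region `4 r² Re ζ + (Im ζ)² ≤ 4 r⁴` inside a
parabola, and for `r = Re p` this region contains `p²` and `q²`. Hence `|Re m| ≤ Re p`, whereas
`Re m = Re b + Re p > Re p`.
-/

namespace Complex

def parabolicRegion (r : ℝ) : Set ℂ :=
  {ζ | 4 * r ^ 2 * ζ.re + ζ.im ^ 2 ≤ 4 * r ^ 4}

theorem abs_re_le_iff_sq_mem_parabolicRegion {r : ℝ} (hr : 0 < r) (w : ℂ) :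
    |w.re| ≤ r ↔ w ^ 2 ∈ parabolicRegion r := by
  have hfactor : 4 * r ^ 2 * (w ^ 2).re + (w ^ 2).im ^ 2 - 4 * r ^ 4
      = 4 * ((w.re ^ 2 - r ^ 2) * (w.im ^ 2 + r ^ 2)) := by
    simp only [sq, mul_re, mul_im]
    ring
  have hpos : 0 < w.im ^ 2 + r ^ 2 := by positivity
  rw [parabolicRegion, Set.mem_ofPred_eq, ← sq_le_sq₀ (abs_nonneg _) hr.le, sq_abs,
    ← sub_nonpos, ← sub_nonpos (b := 4 * r ^ 4), hfactor]
  constructor <;> intro h <;> nlinarith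

theorem convex_parabolicRegion (r : ℝ) : Convex ℝ (parabolicRegion r) := by
  have hre : ConvexOn ℝ Set.univ fun ζ : ℂ => 4 * r ^ 2 * ζ.re :=
    ((4 * r ^ 2) • reLm).convexOn convex_univ
  have him : ConvexOn ℝ Set.univ fun ζ : ℂ => ζ.im ^ 2 :=
    (even_two.convexOn_pow (𝕜 := ℝ)).comp_linearMap imLm
  simpa [parabolicRegion] using (hre.add him).convex_le (4 * r ^ 4)

theorem abs_re_le_of_sq_mem_segment {r : ℝ} (hr : 0 < r) {m p q : ℂ}
    (hp : |p.re| ≤ r) (hq : |q.re| ≤ r) (hm : m ^ 2 ∈ segment ℝ (p ^ 2) (q ^ 2)) :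
    |m.re| ≤ r := by
  rw [abs_re_le_iff_sq_mem_parabolicRegion hr] at hp hq ⊢
  exact (convex_parabolicRegion r).segment_subset hp hq hm

theorem mul_ne_ofReal_mul_add_mul_add {a b c : ℂ} (ha : 0 < a.re) (hb : 0 < b.re)
    (hc : 0 < c.re) {t : ℝ} (ht : 1 ≤ t) : a * c ≠ t * ((a + b) * (b + c)) := by
  intro h
  set p := (a + c) / 2
  set q := (a - c) / 2
  have htne : (t : ℂ) ≠ 0 := ofReal_ne_zero.mpr (by linarith)
  have hsq : (b + p) ^ 2 = (t⁻¹ : ℝ) • p ^ 2 + (1 - t⁻¹ : ℝ) • q ^ 2 := by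
    simp only [real_smul, ofReal_sub, ofReal_one, ofReal_inv]
    field_simp
    linear_combination (-1 : ℂ) * h
  have hmem : (b + p) ^ 2 ∈ segment ℝ (p ^ 2) (q ^ 2) :=
    ⟨t⁻¹, 1 - t⁻¹, by positivity, sub_nonneg.mpr (inv_le_one_of_one_le₀ ht),
      add_sub_cancel _ _, hsq.symm⟩
  have hpre : p.re = (a.re + c.re) / 2 := by simp [p]
  have hqre : q.re = (a.re - c.re) / 2 := by simp [q]
  have hr : 0 < p.re := by linarith
  have hbound : |(b + p).re| ≤ p.re :=
    abs_re_le_of_sq_mem_segment hr (abs_of_pos hr).le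
      (abs_le.mpr ⟨by linarith, by linarith⟩) hmem
  have hmre : (b + p).re = b.re + p.re := add_re b p
  linarith [le_abs_self (b + p).re]

end Complex

/-- 2d case of Theorem 3.1: if `Re z₁ > Re z₂ > Re z₃ > Re z₄` then the
denominator `(z₁-z₃)(z₂-z₄)` is nonzero and the cross-ratio
`z = (z₁-z₂)(z₃-z₄)/((z₁-z₃)(z₂-z₄))` avoids `{0} ∪ [1, +∞)`. -/
theorem stmt_2 (z₁ z₂ z₃ z₄ : ℂ)
    (h12 : z₁.re > z₂.re) (h23 : z₂.re > z₃.re) (h34 : z₃.re > z₄.re) :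
    (z₁ - z₃) * (z₂ - z₄) ≠ 0 ∧
    (z₁ - z₂) * (z₃ - z₄) / ((z₁ - z₃) * (z₂ - z₄)) ≠ 0 ∧
    ∀ t : ℝ, 1 ≤ t → (z₁ - z₂) * (z₃ - z₄) / ((z₁ - z₃) * (z₂ - z₄)) ≠ (t : ℂ) := by
  have ha : 0 < (z₁ - z₂).re := by rw [Complex.sub_re]; linarith
  have hb : 0 < (z₂ - z₃).re := by rw [Complex.sub_re]; linarith
  have hc : 0 < (z₃ - z₄).re := by rw [Complex.sub_re]; linarith
  have hden : (z₁ - z₃) * (z₂ - z₄) ≠ 0 :=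
    mul_ne_zero (Complex.ne_zero_of_re_pos (by rw [Complex.sub_re]; linarith))
      (Complex.ne_zero_of_re_pos (by rw [Complex.sub_re]; linarith))
  have hnum : (z₁ - z₂) * (z₃ - z₄) ≠ 0 :=
    mul_ne_zero (Complex.ne_zero_of_re_pos ha) (Complex.ne_zero_of_re_pos hc)
  refine ⟨hden, div_ne_zero hnum hden, fun t ht h => ?_⟩
  rw [div_eq_iff hden] at h
  exact Complex.mul_ne_ofReal_mul_add_mul_add ha hb hc ht (by linear_combination h)
end

section
/- For every ρ ∈ ℂ with |ρ| < 1, one has ρ ∈ (−1, 0] if and only if 4ρ/(1 + ρ)² ∈ (−∞, 0]. -/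
namespace Complex

theorem one_add_ne_zero_of_neg_one_lt_re {ρ : ℂ} (hρ : -1 < ρ.re) : 1 + ρ ≠ 0 := by
  intro h
  have := congrArg re h
  simp only [add_re, one_re, zero_re] at this
  linarith

/-- Taking imaginary parts gives `(4 - 2t(1 + Re ρ)) Im ρ = 0`, and the first factor is
at least `4` when `t ≤ 0` and `Re ρ > -1`. -/
theorem im_eq_zero_of_four_mul_eq_ofReal_mul_one_add_sq {ρ : ℂ} {t : ℝ} (ht : t ≤ 0)
    (hρ : -1 < ρ.re) (h : 4 * ρ = t * (1 + ρ) ^ 2) : ρ.im = 0 := by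
  have him : 4 * ρ.im = 2 * t * (1 + ρ.re) * ρ.im := by
    have := congrArg im h
    simp only [pow_two, mul_im, mul_re, add_re, add_im, one_re, one_im, ofReal_re, ofReal_im,
      re_ofNat, im_ofNat] at this
    linarith
  have hfactor : 0 < 4 - 2 * t * (1 + ρ.re) := by nlinarith
  have : (4 - 2 * t * (1 + ρ.re)) * ρ.im = 0 := by linarith
  exact (mul_eq_zero.mp this).resolve_left hfactor.ne'

theorem exists_ofReal_mem_Ioc_iff_four_mul_div_one_add_sq_nonpos {ρ : ℂ} (hρ : -1 < ρ.re) :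
    (∃ t : ℝ, -1 < t ∧ t ≤ 0 ∧ ρ = (t : ℂ)) ↔
    (∃ t : ℝ, t ≤ 0 ∧ 4 * ρ / (1 + ρ) ^ 2 = (t : ℂ)) := by
  constructor
  · rintro ⟨s, hs₁, hs₀, rfl⟩
    refine ⟨4 * s / (1 + s) ^ 2, div_nonpos_of_nonpos_of_nonneg (by linarith) (sq_nonneg _), ?_⟩
    push_cast
    rfl
  · rintro ⟨t, ht, heq⟩
    have h : 4 * ρ = t * (1 + ρ) ^ 2 :=
      (div_eq_iff (pow_ne_zero 2 (one_add_ne_zero_of_neg_one_lt_re hρ))).mp heq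
    have hreal : ρ = (ρ.re : ℂ) :=
      ext rfl (by simpa using im_eq_zero_of_four_mul_eq_ofReal_mul_one_add_sq ht hρ h)
    have hre : 4 * ρ.re = t * (1 + ρ.re) ^ 2 := by
      rw [hreal] at h
      exact_mod_cast h
    refine ⟨ρ.re, hρ, ?_, hreal⟩
    linarith [mul_nonpos_of_nonpos_of_nonneg ht (sq_nonneg (1 + ρ.re))]

end Complex

/-- For `ρ` in the open unit disk: `ρ ∈ (-1, 0]` iff `4ρ/(1+ρ)² ∈ (-∞, 0]`. -/
theorem stmt_5 (ρ : ℂ) (h : ‖ρ‖ < 1) :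
    (∃ t : ℝ, -1 < t ∧ t ≤ 0 ∧ ρ = (t : ℂ)) ↔
    (∃ t : ℝ, t ≤ 0 ∧ 4 * ρ / (1 + ρ) ^ 2 = (t : ℂ)) :=
  Complex.exists_ofReal_mem_Ioc_iff_four_mul_div_one_add_sq_nonpos
    (by linarith [neg_abs_le ρ.re, Complex.abs_re_le_norm ρ])
end

section
/- For every χ ∈ ℂ with −π < Re χ < π and Im χ > 0 one has cos(χ/2) ≠ 0 and 1/cos²(χ/2) = 4e^{iχ}/(1 + e^{iχ})²; moreover the map χ ↦ 1/cos²(χ/2) is a bijection from the half-strip {χ ∈ ℂ : −π < Re χ < π, Im χ > 0} onto the double-cut plane ℂ ∖ ((−∞, 0] ∪ [1, +∞)). -/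
/-!
Put `ρ = e^{iχ}`. Then `(1 + ρ)² = 4ρ cos²(χ/2)`, which gives the formula, and `χ ↦ ρ` maps the
half-strip bijectively onto the unit disk slit along `(-1, 0]`, with inverse `ρ ↦ -i log ρ`.
The map `ρ ↦ 4ρ/(1+ρ)²` is `1 - w²` for the Cayley transform `w = (1-ρ)/(1+ρ)`; this involution
exchanges the slit disk with the right half-plane slit along `[1, ∞)`, and `w ↦ 1 - w²` maps the
latter onto the double-cut plane, with inverse the principal branch of `z ↦ √(1 - z)`.
-/

open Real

open Complex Set

lemma mem_slitPlane_iff_not_exists_nonpos {z : ℂ} :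
    z ∈ slitPlane ↔ ¬∃ t : ℝ, t ≤ 0 ∧ z = t := by
  rw [mem_slitPlane_iff, ← not_le_zero_iff]
  refine not_congr ⟨fun h => ⟨z.re, h.1, ext rfl h.2⟩, ?_⟩
  rintro ⟨t, ht, rfl⟩
  exact_mod_cast ht

lemma one_sub_mem_slitPlane_iff {z : ℂ} :
    1 - z ∈ slitPlane ↔ ¬∃ t : ℝ, 1 ≤ t ∧ z = t := by
  rw [mem_slitPlane_iff_not_exists_nonpos]
  refine not_congr ⟨fun ⟨t, ht, h⟩ => ⟨1 - t, by linarith, ?_⟩,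
    fun ⟨t, ht, h⟩ => ⟨1 - t, by linarith, ?_⟩⟩ <;> push_cast <;> linear_combination -h

lemma one_add_exp_I_mul_sq (χ : ℂ) :
    (1 + exp (I * χ)) ^ 2 = 4 * Complex.cos (χ / 2) ^ 2 * exp (I * χ) := by
  have hsq : exp (I * χ) = exp (χ / 2 * I) ^ 2 := by rw [← Complex.exp_nat_mul]; ring_nf
  rw [Complex.cos, neg_mul, Complex.exp_neg, hsq]
  field_simp
  ring

lemma cos_half_ne_zero {χ : ℂ} (hχ : χ.im ≠ 0) : Complex.cos (χ / 2) ≠ 0 := by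
  rw [Complex.cos_ne_zero_iff]
  intro k hk
  apply hχ
  simpa using congrArg (2 * im ·) hk

lemma one_div_cos_half_sq {χ : ℂ} (hχ : χ.im ≠ 0) :
    1 / Complex.cos (χ / 2) ^ 2 = 4 * exp (I * χ) / (1 + exp (I * χ)) ^ 2 := by
  rw [one_add_exp_I_mul_sq]
  field_simp [Complex.exp_ne_zero, cos_half_ne_zero hχ]

def halfStrip : Set ℂ := {χ | -π < χ.re ∧ χ.re < π ∧ 0 < χ.im}

def slitDisk : Set ℂ := {ρ | ‖ρ‖ < 1 ∧ ρ ∈ slitPlane}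

-- `1 - w ∈ slitPlane` says that `w ∉ [1, ∞)`.
def cutRightHalfPlane : Set ℂ := {w | 0 < w.re ∧ 1 - w ∈ slitPlane}

def doubleSlitPlane : Set ℂ := {z | z ∈ slitPlane ∧ 1 - z ∈ slitPlane}

lemma doubleSlitPlane_eq :
    doubleSlitPlane = {z : ℂ | (¬∃ t : ℝ, t ≤ 0 ∧ z = t) ∧ ¬∃ t : ℝ, 1 ≤ t ∧ z = t} :=
  ext fun _ => and_congr mem_slitPlane_iff_not_exists_nonpos one_sub_mem_slitPlane_iff

lemma bijOn_exp_I_mul : BijOn (fun χ => exp (I * χ)) halfStrip slitDisk := by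
  have hinv : InvOn (fun ρ : ℂ => -I * Complex.log ρ) (fun χ => exp (I * χ))
      halfStrip slitDisk := by
    refine ⟨fun χ hχ => ?_, fun ρ hρ => ?_⟩
    · show -I * Complex.log (exp (I * χ)) = χ
      rw [log_exp (by simpa using hχ.1) (by simpa using hχ.2.1.le), ← mul_assoc, neg_mul, I_mul_I,
        neg_neg, one_mul]
    · show exp (I * (-I * Complex.log ρ)) = ρ
      rw [← mul_assoc, mul_neg, I_mul_I, neg_neg, one_mul, exp_log (slitPlane_ne_zero hρ.2)]
  refine hinv.bijOn (fun χ ⟨h1, h2, h3⟩ => ⟨?_, ?_⟩) (fun ρ ⟨h1, h2⟩ => ⟨?_, ?_, ?_⟩)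
  · simpa [norm_exp] using h3
  · have him : (I * χ).im = χ.re := by simp
    rw [exp_mem_slitPlane, (toIocMod_eq_self _).2 (by rw [him]; constructor <;> linarith), him]
    exact h2.ne
  · simpa [log_im] using neg_pi_lt_arg ρ
  · simpa [log_im] using lt_of_le_of_ne (arg_le_pi ρ) (slitPlane_arg_ne_pi h2)
  · simpa [log_re] using Real.log_neg (norm_pos_iff.2 (slitPlane_ne_zero h2)) h1

noncomputable def cayley (w : ℂ) : ℂ := (1 - w) / (1 + w)

lemma cayley_cayley {w : ℂ} (hw : 1 + w ≠ 0) : cayley (cayley w) = w := by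
  unfold cayley
  field_simp
  ring

lemma cayley_ofReal (t : ℝ) : cayley t = ((1 - t) / (1 + t) : ℝ) := by
  push_cast [cayley]
  rfl

lemma one_sub_cayley_sq {w : ℂ} (hw : 1 + w ≠ 0) : 1 - cayley w ^ 2 = 4 * w / (1 + w) ^ 2 := by
  unfold cayley
  field_simp
  ring

lemma one_add_ne_zero_of_norm_lt_one {w : ℂ} (hw : ‖w‖ < 1) : 1 + w ≠ 0 :=
  slitPlane_ne_zero (mem_slitPlane_of_norm_lt_one hw)

lemma one_add_ne_zero_of_re_pos {w : ℂ} (hw : 0 < w.re) : 1 + w ≠ 0 := by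
  intro h
  have := congrArg re h
  simp only [add_re, one_re, zero_re] at this
  linarith

lemma re_cayley_pos {w : ℂ} (hw : ‖w‖ < 1) : 0 < (cayley w).re := by
  have hn : 0 < normSq (1 + w) := normSq_pos.2 (one_add_ne_zero_of_norm_lt_one hw)
  have hw2 : w.re * w.re + w.im * w.im < 1 := by
    rw [← normSq_apply, ← Complex.sq_norm]
    nlinarith [norm_nonneg w]
  rw [cayley, div_re, ← add_div]
  apply div_pos _ hn
  simp only [sub_re, one_re, add_re, sub_im, one_im, zero_sub, add_im, zero_add, neg_mul,
    lt_add_neg_iff_add_lt]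
  nlinarith

lemma norm_cayley_lt_one {w : ℂ} (hw : 0 < w.re) : ‖cayley w‖ < 1 := by
  rw [cayley, norm_div, div_lt_one (norm_pos_iff.2 (one_add_ne_zero_of_re_pos hw)),
    ← sq_lt_sq₀ (norm_nonneg _) (norm_nonneg _), Complex.sq_norm, Complex.sq_norm,
    normSq_apply, normSq_apply]
  simp only [sub_re, one_re, sub_im, one_im, zero_sub, mul_neg, neg_mul, neg_neg, add_re, add_im,
    zero_add, add_lt_add_iff_right]
  nlinarith

-- The slits correspond because `cayley` maps `(-1, 0]` onto `[1, ∞)`.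
lemma bijOn_cayley : BijOn cayley slitDisk cutRightHalfPlane := by
  have hinv : InvOn cayley cayley slitDisk cutRightHalfPlane :=
    ⟨fun ρ hρ => cayley_cayley (one_add_ne_zero_of_norm_lt_one hρ.1),
      fun w hw => cayley_cayley (one_add_ne_zero_of_re_pos hw.1)⟩
  refine hinv.bijOn (fun ρ ⟨hρ, hslit⟩ => ⟨re_cayley_pos hρ, ?_⟩)
    (fun w ⟨hw, hslit⟩ => ⟨norm_cayley_lt_one hw, ?_⟩)
  · refine one_sub_mem_slitPlane_iff.2 fun ⟨t, ht, h⟩ => ?_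
    have hρt : ρ = ((1 - t) / (1 + t) : ℝ) := by
      rw [← cayley_ofReal, ← h, cayley_cayley (one_add_ne_zero_of_norm_lt_one hρ)]
    exact mem_slitPlane_iff_not_exists_nonpos.1 hslit
      ⟨_, div_nonpos_of_nonpos_of_nonneg (by linarith) (by linarith), hρt⟩
  · refine mem_slitPlane_iff_not_exists_nonpos.2 fun ⟨t, ht, h⟩ => ?_
    have ht1 : -1 < t := by
      have := norm_cayley_lt_one hw
      rw [h, norm_real, Real.norm_eq_abs] at this
      linarith [neg_abs_le t]
    have hwt : w = ((1 - t) / (1 + t) : ℝ) := by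
      rw [← cayley_ofReal, ← h, cayley_cayley (one_add_ne_zero_of_re_pos hw)]
    exact one_sub_mem_slitPlane_iff.1 hslit
      ⟨_, (le_div_iff₀ (by linarith)).2 (by linarith), hwt⟩

lemma sq_mem_slitPlane {w : ℂ} (hw : 0 < w.re) : w ^ 2 ∈ slitPlane := by
  rw [mem_slitPlane_iff]
  by_cases h : w.im = 0
  · left
    simp only [sq, mul_re, h, mul_zero, sub_zero]
    positivity
  · right
    simp only [sq, mul_im]
    intro h'
    exact mul_ne_zero hw.ne' h (by linarith)

lemma one_sub_sq_mem_slitPlane {w : ℂ} (hw : w ∈ cutRightHalfPlane) : 1 - w ^ 2 ∈ slitPlane := by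
  obtain ⟨hre, h1⟩ := hw
  rw [mem_slitPlane_iff] at h1 ⊢
  simp only [sub_re, one_re, sub_pos, sub_im, one_im, zero_sub, ne_eq, neg_eq_zero, sq, mul_re,
    mul_im, neg_add_rev] at h1 ⊢
  by_cases h : w.im = 0
  · left
    simp only [h, not_true_eq_false, or_false] at h1
    nlinarith
  · right
    intro h'
    exact mul_ne_zero hre.ne' h (by linarith)

lemma re_cpow_two_inv_pos {z : ℂ} (hz : z ∈ slitPlane) : 0 < (z ^ (2⁻¹ : ℂ)).re := by
  rw [cpow_inv_two_re, Real.sqrt_pos]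
  have : -z.re < ‖z‖ := by
    rcases mem_slitPlane_iff.1 hz with h | h
    · linarith [norm_nonneg z]
    · linarith [neg_abs_le z.re, abs_re_lt_norm.2 h]
  linarith

lemma bijOn_one_sub_sq : BijOn (fun w => 1 - w ^ 2) cutRightHalfPlane doubleSlitPlane := by
  have hinv : InvOn (fun z => (1 - z) ^ (2⁻¹ : ℂ)) (fun w => 1 - w ^ 2)
      cutRightHalfPlane doubleSlitPlane :=
    ⟨fun w hw => by simp only [sub_sub_cancel]; exact sq_cpow_two_inv hw.1,
      fun z _ => by simp only [cpow_ofNat_inv_pow, sub_sub_cancel]⟩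
  refine hinv.bijOn (fun w hw => ⟨one_sub_sq_mem_slitPlane hw, ?_⟩)
    (fun z ⟨hz, hz1⟩ => ⟨re_cpow_two_inv_pos hz1, ?_⟩)
  · rw [sub_sub_cancel]
    exact sq_mem_slitPlane hw.1
  · refine one_sub_mem_slitPlane_iff.2 fun ⟨t, ht, h⟩ => ?_
    have hsq : (t : ℂ) ^ 2 = 1 - z := h ▸ cpow_ofNat_inv_pow (1 - z) 2
    exact mem_slitPlane_iff_not_exists_nonpos.1 hz ⟨1 - t ^ 2, by nlinarith, by
      push_cast; linear_combination hsq⟩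

lemma bijOn_four_mul_div_one_add_sq :
    BijOn (fun ρ : ℂ => 4 * ρ / (1 + ρ) ^ 2) slitDisk doubleSlitPlane :=
  (bijOn_one_sub_sq.comp bijOn_cayley).congr fun _ hρ =>
    one_sub_cayley_sq (one_add_ne_zero_of_norm_lt_one hρ.1)

/-- For `χ` in the half-strip `{-π < Re χ < π, Im χ > 0}` one has
`cos(χ/2) ≠ 0` and `1/cos²(χ/2) = 4e^{iχ}/(1+e^{iχ})²`; moreover
`χ ↦ 1/cos²(χ/2)` is a bijection from the half-strip onto the
double-cut plane `ℂ ∖ ((-∞, 0] ∪ [1, +∞))`. -/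
theorem stmt_7 :
    (∀ χ : ℂ, -π < χ.re → χ.re < π → 0 < χ.im →
      Complex.cos (χ / 2) ≠ 0 ∧
      1 / Complex.cos (χ / 2) ^ 2 =
        4 * Complex.exp (Complex.I * χ) / (1 + Complex.exp (Complex.I * χ)) ^ 2) ∧
    Set.BijOn (fun χ : ℂ => 1 / Complex.cos (χ / 2) ^ 2)
      {χ : ℂ | -π < χ.re ∧ χ.re < π ∧ 0 < χ.im}
      {z : ℂ | (¬ ∃ t : ℝ, t ≤ 0 ∧ z = (t : ℂ)) ∧ (¬ ∃ t : ℝ, 1 ≤ t ∧ z = (t : ℂ))} := by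
  refine ⟨fun χ _ _ hχ => ⟨cos_half_ne_zero hχ.ne', one_div_cos_half_sq hχ.ne'⟩, ?_⟩
  rw [← doubleSlitPlane_eq]
  exact (bijOn_four_mul_div_one_add_sq.comp bijOn_exp_I_mul).congr fun χ hχ =>
    (one_div_cos_half_sq hχ.2.2.ne').symm
end

section
/- Model Minkowski space as M = ℝ × E, where E is a real inner product space with dim E ≥ 2 (so d ≥ 3). For any three points x₁, x₂, x₃ ∈ M, the set {y ∈ M : y is spacelike separated from each of x₁, x₂, x₃} is nonempty and path-connected. -/
/-!
Write `xᵢ = (tᵢ, cᵢ)`. Over a spatial point `z`, the admissible times form the open interval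
`(maxᵢ (tᵢ - ‖z - cᵢ‖), minᵢ (tᵢ + ‖z - cᵢ‖))`, whose ends depend continuously on `z`; so the set
is path connected as soon as its spatial shadow `{z | ∀ i j, |tᵢ - tⱼ| < ‖z - cᵢ‖ + ‖z - cⱼ‖}` is.

The complement of the shadow is the union of the filled ellipsoids
`‖z - cᵢ‖ + ‖z - cⱼ‖ ≤ |tᵢ - tⱼ|`. Ordering the points by time, the ellipsoid of a causally related
pair contains both foci and the one of a spacelike pair is empty, and a case analysis shows that
the union is covered by two closed convex sets avoiding any given point `z` of the shadow.
Separating `z` from each of them by a linear functional and using `dim E ≥ 2` to find a nonzero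
direction on which both functionals are nonnegative gives a ray from `z` inside the shadow.
The ray reaches the exterior of a large ball, which lies in the shadow and is path connected.
-/

open Set

theorem exists_ne_zero_apply_eq_zero_apply_nonneg {V : Type*} [AddCommGroup V] [Module ℝ V]
    (hV : 1 < Module.rank ℝ V) (f g : V →ₗ[ℝ] ℝ) : ∃ w : V, w ≠ 0 ∧ f w = 0 ∧ 0 ≤ g w := by
  obtain ⟨v, hv, hv0⟩ : ∃ v ∈ LinearMap.ker f, v ≠ 0 := by
    refine Submodule.exists_mem_ne_zero_of_ne_bot fun hker => hV.not_ge ?_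
    simpa using f.lift_rank_le_of_injective (LinearMap.ker_eq_bot.1 hker)
  rw [LinearMap.mem_ker] at hv
  rcases le_total 0 (g v) with hg | hg
  · exact ⟨v, hv0, hv, hg⟩
  · exact ⟨-v, neg_ne_zero.2 hv0, by simp [hv], by simpa using hg⟩

theorem notMem_segment_of_mem_segment_of_mem_segment {V : Type*} [AddCommGroup V] [Module ℝ V]
    {a b c y : V} (ha : y ≠ a) (hb : y ≠ b) (hc : y ≠ c) (hbc : y ∈ segment ℝ b c)
    (hac : y ∈ segment ℝ a c) : y ∉ segment ℝ a b := by
  rw [mem_segment_iff_sameRay] at hbc hac ⊢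
  intro hab
  have hba : SameRay ℝ (y - b) (y - a) :=
    hbc.trans hac.symm fun h => absurd (sub_eq_zero.1 h).symm hc
  have hbb : SameRay ℝ (y - b) (-(y - b)) := by
    simpa using hba.trans hab fun h => Or.inl (absurd (sub_eq_zero.1 h) ha)
  exact hb (sub_eq_zero.1 (eq_zero_of_sameRay_self_neg hbb))

section Normed

variable {E : Type*} [NormedAddCommGroup E] [NormedSpace ℝ E]

theorem isClosed_segment (a b : E) : IsClosed (segment ℝ a b) := by
  rw [segment_eq_image_lineMap]
  exact (isCompact_Icc.image (AffineMap.lineMap_continuous (R := ℝ))).isClosed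

theorem exists_ray_of_compl_subset (hE : 1 < Module.rank ℝ E) {K₁ K₂ s : Set E}
    (hc₁ : Convex ℝ K₁) (hK₁ : IsClosed K₁) (hc₂ : Convex ℝ K₂) (hK₂ : IsClosed K₂)
    (hs : (K₁ ∪ K₂)ᶜ ⊆ s) {y : E} (hy₁ : y ∉ K₁) (hy₂ : y ∉ K₂) :
    ∃ w ≠ (0 : E), ∀ ρ : ℝ, 0 ≤ ρ → y + ρ • w ∈ s := by
  obtain ⟨f₁, u₁, hf₁, hu₁⟩ := geometric_hahn_banach_closed_point hc₁ hK₁ hy₁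
  obtain ⟨f₂, u₂, hf₂, hu₂⟩ := geometric_hahn_banach_closed_point hc₂ hK₂ hy₂
  obtain ⟨w, hw, hw₁, hw₂⟩ := exists_ne_zero_apply_eq_zero_apply_nonneg hE f₁ f₂
  refine ⟨w, hw, fun ρ hρ => hs ?_⟩
  have hmono : ∀ f : E →L[ℝ] ℝ, 0 ≤ f w → f y ≤ f (y + ρ • w) := fun f hf => by
    simpa using mul_nonneg hρ hf
  rintro (h | h)
  · exact lt_asymm (hf₁ _ h) (hu₁.trans_le (hmono f₁ hw₁.ge))
  · exact lt_asymm (hf₂ _ h) (hu₂.trans_le (hmono f₂ hw₂))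

theorem exists_ray_notMem_three (hE : 1 < Module.rank ℝ E) {a b c y : E} (ha : y ≠ a)
    (hb : y ≠ b) (hc : y ≠ c) :
    ∃ w ≠ (0 : E), ∀ ρ : ℝ, 0 ≤ ρ → y + ρ • w ∈ ({a, b, c} : Set E)ᶜ := by
  have cover : ∀ {p q r : E}, y ∉ segment ℝ p q → y ≠ r →
      ({a, b, c} : Set E) ⊆ segment ℝ p q ∪ {r} →
      ∃ w ≠ (0 : E), ∀ ρ : ℝ, 0 ≤ ρ → y + ρ • w ∈ ({a, b, c} : Set E)ᶜ := fun hy hr hsub =>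
    exists_ray_of_compl_subset hE (convex_segment _ _) (isClosed_segment _ _) (convex_singleton _)
      isClosed_singleton (compl_subset_compl.2 hsub) hy hr
  by_cases hbc : y ∈ segment ℝ b c
  · by_cases hac : y ∈ segment ℝ a c
    · refine cover (notMem_segment_of_mem_segment_of_mem_segment ha hb hc hbc hac) hc ?_
      simp [insert_subset_iff, left_mem_segment, right_mem_segment]
    · refine cover hac hb ?_
      simp [insert_subset_iff, left_mem_segment, right_mem_segment]
  · refine cover hbc ha ?_
    simp [insert_subset_iff, left_mem_segment, right_mem_segment]

end Normed

section Metric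

variable {X : Type*} [MetricSpace X] {a b d : X} {m m' : ℝ}

def ellipsoid (a b : X) (m : ℝ) : Set X := {z | dist z a + dist z b ≤ m}

theorem ellipsoid_comm (a b : X) (m : ℝ) : ellipsoid a b m = ellipsoid b a m := by
  ext z; simp only [ellipsoid, mem_ofPred_eq, add_comm]

theorem isClosed_ellipsoid (a b : X) (m : ℝ) : IsClosed (ellipsoid a b m) :=
  isClosed_le (by fun_prop) continuous_const

theorem left_mem_ellipsoid (h : dist a b ≤ m) : a ∈ ellipsoid a b m := by
  simpa [ellipsoid] using h

theorem right_mem_ellipsoid (h : dist a b ≤ m) : b ∈ ellipsoid a b m := by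
  simpa [ellipsoid, dist_comm] using h

theorem ellipsoid_subset_of_lt_dist (h : m < dist a b) (s : Set X) : ellipsoid a b m ⊆ s :=
  fun z hz => absurd ((dist_triangle_left a b z).trans hz) h.not_ge

theorem ellipsoid_self_zero (a : X) : ellipsoid a a 0 = {a} := by
  ext z
  have := dist_nonneg (x := z) (y := a)
  simp only [ellipsoid, mem_ofPred_eq, mem_singleton_iff, ← dist_le_zero]
  constructor <;> intro <;> linarith

theorem ellipsoid_subset_ellipsoid_right (h : m + dist b d ≤ m') :
    ellipsoid a b m ⊆ ellipsoid a d m' := fun z hz => by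
  have := dist_triangle z b d
  simp only [ellipsoid, mem_ofPred_eq] at hz ⊢
  linarith

theorem ellipsoid_subset_ellipsoid_left (h : m + dist a d ≤ m') :
    ellipsoid a b m ⊆ ellipsoid d b m' := by
  rw [ellipsoid_comm, ellipsoid_comm d]
  exact ellipsoid_subset_ellipsoid_right h

variable {ι : Type*}

-- The projection of `spacelikeSet t c` to space (see `isPathConnected_spacelikeSet`).
def spacelikeShadow (t : ι → ℝ) (c : ι → X) : Set X :=
  {z | ∀ i j, |t i - t j| < dist z (c i) + dist z (c j)}

theorem spacelikeShadow_comp_equiv (t : ι → ℝ) (c : ι → X) (σ : Equiv.Perm ι) :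
    spacelikeShadow (t ∘ σ) (c ∘ σ) = spacelikeShadow t c := by
  ext z
  exact σ.forall_congr fun {_} => σ.forall_congr fun {_} => Iff.rfl

theorem ne_of_mem_spacelikeShadow {t : ι → ℝ} {c : ι → X} {z : X} (hz : z ∈ spacelikeShadow t c)
    (i : ι) : z ≠ c i := by
  rintro rfl
  simpa using hz i i

section Monotone

variable [LinearOrder ι] {t : ι → ℝ} {c : ι → X}

theorem notMem_ellipsoid_of_mem_spacelikeShadow (ht : Monotone t) {z : X}
    (hz : z ∈ spacelikeShadow t c) {i j : ι} (hij : i ≤ j) :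
    z ∉ ellipsoid (c i) (c j) (t j - t i) := fun h =>
  (hz i j).not_ge (by rwa [abs_sub_comm, abs_of_nonneg (sub_nonneg.2 (ht hij))])

theorem compl_subset_spacelikeShadow (ht : Monotone t) {K : Set X}
    (hK : ∀ i j, i ≤ j → ellipsoid (c i) (c j) (t j - t i) ⊆ K) :
    Kᶜ ⊆ spacelikeShadow t c := by
  have key : ∀ z ∉ K, ∀ i j, i ≤ j → |t i - t j| < dist z (c i) + dist z (c j) := by
    intro z hz i j hij
    rw [abs_sub_comm, abs_of_nonneg (sub_nonneg.2 (ht hij))]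
    exact not_le.1 fun h => hz (hK i j hij h)
  intro z hz i j
  rcases le_total i j with hij | hji
  · exact key z hz i j hij
  · rw [abs_sub_comm, add_comm]
    exact key z hz j i hji

end Monotone

theorem compl_subset_spacelikeShadow_fin_three {t : Fin 3 → ℝ} {c : Fin 3 → X} (ht : Monotone t)
    {K : Set X} (h₀ : c 0 ∈ K) (h₁ : c 1 ∈ K) (h₂ : c 2 ∈ K)
    (h₀₁ : ellipsoid (c 0) (c 1) (t 1 - t 0) ⊆ K) (h₀₂ : ellipsoid (c 0) (c 2) (t 2 - t 0) ⊆ K)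
    (h₁₂ : ellipsoid (c 1) (c 2) (t 2 - t 1) ⊆ K) : Kᶜ ⊆ spacelikeShadow t c := by
  refine compl_subset_spacelikeShadow ht fun i j hij => ?_
  fin_cases i <;> fin_cases j <;> simp_all [ellipsoid_self_zero]

end Metric

section Shadow

variable {E : Type*} [NormedAddCommGroup E]

theorem setOf_lt_norm_subset_spacelikeShadow {ι : Type*} [Fintype ι] (t : ι → ℝ) (c : ι → E) :
    {z : E | ∑ i, (‖c i‖ + |t i|) < ‖z‖} ⊆ spacelikeShadow t c := by
  intro z hz
  have hfar : ∀ i, |t i| < dist z (c i) := fun i => by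
    have hi : ‖c i‖ + |t i| ≤ ∑ i, (‖c i‖ + |t i|) :=
      Finset.single_le_sum (f := fun j => ‖c j‖ + |t j|) (fun j _ => by positivity)
        (Finset.mem_univ i)
    have := norm_sub_norm_le z (c i)
    rw [dist_eq_norm]
    linarith [show _ < ‖z‖ from hz]
  intro i j
  exact (abs_sub _ _).trans_lt (add_lt_add (hfar i) (hfar j))

variable [NormedSpace ℝ E]

theorem convex_ellipsoid (a b : E) (m : ℝ) : Convex ℝ (ellipsoid a b m) := by
  simpa [ellipsoid] using
    ((convexOn_dist a convex_univ).add (convexOn_dist b convex_univ)).convex_le m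

-- `eᵢⱼ : dist (c i) (c j) ≤ t j - t i` says that the events `i ≤ j` are causally related.
theorem exists_ray_spacelikeShadow_of_dist_le (hE : 1 < Module.rank ℝ E) {t : Fin 3 → ℝ}
    {c : Fin 3 → E} (ht : Monotone t) {y : E} (hy : y ∈ spacelikeShadow t c)
    (e₀₂ : dist (c 0) (c 2) ≤ t 2 - t 0) :
    ∃ w ≠ (0 : E), ∀ ρ : ℝ, 0 ≤ ρ → y + ρ • w ∈ spacelikeShadow t c := by
  have hy₀₂ := notMem_ellipsoid_of_mem_spacelikeShadow ht hy (show (0 : Fin 3) ≤ 2 by decide)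
  by_cases e₀₁ : dist (c 0) (c 1) ≤ t 1 - t 0
  · refine exists_ray_of_compl_subset hE (convex_ellipsoid _ _ _) (isClosed_ellipsoid _ _ _)
      (convex_ellipsoid _ _ _) (isClosed_ellipsoid _ _ _)
      (compl_subset_spacelikeShadow_fin_three ht (.inl (left_mem_ellipsoid e₀₁))
        (.inl (right_mem_ellipsoid e₀₁)) (.inr (right_mem_ellipsoid e₀₂)) subset_union_left
        subset_union_right ((ellipsoid_subset_ellipsoid_left ?_).trans subset_union_right))
      (notMem_ellipsoid_of_mem_spacelikeShadow ht hy (show (0 : Fin 3) ≤ 1 by decide)) hy₀₂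
    rw [dist_comm]
    linarith
  by_cases e₁₂ : dist (c 1) (c 2) ≤ t 2 - t 1
  · refine exists_ray_of_compl_subset hE (convex_ellipsoid _ _ _) (isClosed_ellipsoid _ _ _)
      (convex_ellipsoid _ _ _) (isClosed_ellipsoid _ _ _)
      (compl_subset_spacelikeShadow_fin_three ht (.inr (left_mem_ellipsoid e₀₂))
        (.inl (left_mem_ellipsoid e₁₂)) (.inl (right_mem_ellipsoid e₁₂))
        ((ellipsoid_subset_ellipsoid_right ?_).trans subset_union_right) subset_union_right
        subset_union_left)
      (notMem_ellipsoid_of_mem_spacelikeShadow ht hy (show (1 : Fin 3) ≤ 2 by decide)) hy₀₂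
    linarith
  · exact exists_ray_of_compl_subset hE (convex_ellipsoid _ _ _) (isClosed_ellipsoid _ _ _)
      (convex_singleton _) isClosed_singleton
      (compl_subset_spacelikeShadow_fin_three ht (.inl (left_mem_ellipsoid e₀₂)) (.inr rfl)
        (.inl (right_mem_ellipsoid e₀₂)) (ellipsoid_subset_of_lt_dist (not_le.1 e₀₁) _)
        subset_union_left (ellipsoid_subset_of_lt_dist (not_le.1 e₁₂) _))
      hy₀₂ (ne_of_mem_spacelikeShadow hy 1)

theorem exists_ray_spacelikeShadow_of_lt_dist (hE : 1 < Module.rank ℝ E) {t : Fin 3 → ℝ}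
    {c : Fin 3 → E} (ht : Monotone t) {y : E} (hy : y ∈ spacelikeShadow t c)
    (e₀₂ : t 2 - t 0 < dist (c 0) (c 2)) :
    ∃ w ≠ (0 : E), ∀ ρ : ℝ, 0 ≤ ρ → y + ρ • w ∈ spacelikeShadow t c := by
  have hB₀₂ := ellipsoid_subset_of_lt_dist e₀₂
  -- by the triangle inequality, the pairs `(0, 1)` and `(1, 2)` are not both causal
  have tri := dist_triangle (c 0) (c 1) (c 2)
  by_cases e₀₁ : dist (c 0) (c 1) ≤ t 1 - t 0
  · exact exists_ray_of_compl_subset hE (convex_ellipsoid _ _ _) (isClosed_ellipsoid _ _ _)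
      (convex_singleton _) isClosed_singleton
      (compl_subset_spacelikeShadow_fin_three ht (.inl (left_mem_ellipsoid e₀₁))
        (.inl (right_mem_ellipsoid e₀₁)) (.inr rfl) subset_union_left (hB₀₂ _)
        (ellipsoid_subset_of_lt_dist (by linarith) _))
      (notMem_ellipsoid_of_mem_spacelikeShadow ht hy (show (0 : Fin 3) ≤ 1 by decide))
      (ne_of_mem_spacelikeShadow hy 2)
  by_cases e₁₂ : dist (c 1) (c 2) ≤ t 2 - t 1
  · exact exists_ray_of_compl_subset hE (convex_ellipsoid _ _ _) (isClosed_ellipsoid _ _ _)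
      (convex_singleton _) isClosed_singleton
      (compl_subset_spacelikeShadow_fin_three ht (.inr rfl) (.inl (left_mem_ellipsoid e₁₂))
        (.inl (right_mem_ellipsoid e₁₂)) (ellipsoid_subset_of_lt_dist (not_le.1 e₀₁) _)
        (hB₀₂ _) subset_union_left)
      (notMem_ellipsoid_of_mem_spacelikeShadow ht hy (show (1 : Fin 3) ≤ 2 by decide))
      (ne_of_mem_spacelikeShadow hy 0)
  · obtain ⟨w, hw, hray⟩ := exists_ray_notMem_three hE (ne_of_mem_spacelikeShadow hy 0)
      (ne_of_mem_spacelikeShadow hy 1) (ne_of_mem_spacelikeShadow hy 2)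
    exact ⟨w, hw, fun ρ hρ => compl_subset_spacelikeShadow_fin_three ht (by simp) (by simp)
      (by simp) (ellipsoid_subset_of_lt_dist (not_le.1 e₀₁) _) (hB₀₂ _)
      (ellipsoid_subset_of_lt_dist (not_le.1 e₁₂) _) (hray ρ hρ)⟩

theorem exists_ray_spacelikeShadow_of_monotone (hE : 1 < Module.rank ℝ E) {t : Fin 3 → ℝ}
    {c : Fin 3 → E} (ht : Monotone t) {y : E} (hy : y ∈ spacelikeShadow t c) :
    ∃ w ≠ (0 : E), ∀ ρ : ℝ, 0 ≤ ρ → y + ρ • w ∈ spacelikeShadow t c :=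
  (le_or_gt (dist (c 0) (c 2)) (t 2 - t 0)).elim
    (exists_ray_spacelikeShadow_of_dist_le hE ht hy)
    (exists_ray_spacelikeShadow_of_lt_dist hE ht hy)

theorem exists_ray_spacelikeShadow (hE : 1 < Module.rank ℝ E) (t : Fin 3 → ℝ) (c : Fin 3 → E)
    {y : E} (hy : y ∈ spacelikeShadow t c) :
    ∃ w ≠ (0 : E), ∀ ρ : ℝ, 0 ≤ ρ → y + ρ • w ∈ spacelikeShadow t c := by
  rw [← spacelikeShadow_comp_equiv t c (Tuple.sort t)] at hy ⊢
  exact exists_ray_spacelikeShadow_of_monotone hE (Tuple.monotone_sort t) hy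

theorem isPathConnected_setOf_lt_norm (hE : 1 < Module.rank ℝ E) {r : ℝ} (hr : 0 ≤ r) :
    IsPathConnected {z : E | r < ‖z‖} := by
  have himage : {z : E | r < ‖z‖} =
      (fun p : E × ℝ => p.2 • p.1) '' (Metric.sphere 0 1 ×ˢ Ioi r) := by
    ext z
    constructor
    · intro hz
      have hz0 : ‖z‖ ≠ 0 := (hr.trans_lt hz).ne'
      exact ⟨(‖z‖⁻¹ • z, ‖z‖), ⟨by simp [norm_smul, hz0], hz⟩, by simp [smul_smul, hz0]⟩
    · rintro ⟨⟨v, s⟩, ⟨hv, hs⟩, rfl⟩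
      have hs0 : 0 ≤ s := hr.trans (le_of_lt hs)
      simpa [norm_smul, abs_of_nonneg hs0, mem_sphere_zero_iff_norm.1 hv] using hs
  rw [himage]
  exact ((isPathConnected_sphere hE 0 zero_le_one).prod
    ((convex_Ioi r).isPathConnected nonempty_Ioi)).image (by fun_prop)

theorem exists_lt_norm_add_smul (y : E) {w : E} (hw : w ≠ 0) (R : ℝ) :
    ∃ ρ : ℝ, 0 ≤ ρ ∧ R < ‖y + ρ • w‖ := by
  have hw' : 0 < ‖w‖ := norm_pos_iff.2 hw
  set ρ := (|R| + ‖y‖ + 1) / ‖w‖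
  have hρ : 0 ≤ ρ := by positivity
  refine ⟨ρ, hρ, ?_⟩
  have h : ‖ρ • w‖ = |R| + ‖y‖ + 1 := by
    rw [norm_smul, Real.norm_of_nonneg hρ, div_mul_cancel₀ _ hw'.ne']
  have := norm_sub_norm_le (ρ • w) (-y)
  rw [sub_neg_eq_add, norm_neg, add_comm] at this
  linarith [le_abs_self R]

theorem IsPathConnected.of_forall_joinedIn {X : Type*} [TopologicalSpace X] {F s : Set X}
    (hF : IsPathConnected F) (hFs : F ⊆ s) (h : ∀ y ∈ s, ∃ z ∈ F, JoinedIn s y z) :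
    IsPathConnected s := by
  obtain ⟨b, hb, hbF⟩ := hF
  refine ⟨b, hFs hb, fun y hy => ?_⟩
  obtain ⟨z, hz, hyz⟩ := h y hy
  exact ((hbF hz).mono hFs).trans hyz.symm

theorem isPathConnected_spacelikeShadow (hE : 1 < Module.rank ℝ E) (t : Fin 3 → ℝ)
    (c : Fin 3 → E) : IsPathConnected (spacelikeShadow t c) := by
  refine (isPathConnected_setOf_lt_norm hE (by positivity)).of_forall_joinedIn
    (setOf_lt_norm_subset_spacelikeShadow t c) fun y hy => ?_
  obtain ⟨w, hw, hray⟩ := exists_ray_spacelikeShadow hE t c hy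
  obtain ⟨ρ, hρ, hfar⟩ := exists_lt_norm_add_smul y hw (∑ i, (‖c i‖ + |t i|))
  refine ⟨y + ρ • w, hfar, JoinedIn.of_segment_subset ?_⟩
  rw [segment_eq_image']
  rintro _ ⟨θ, hθ, rfl⟩
  simpa [smul_smul] using hray (θ * ρ) (mul_nonneg hθ.1 hρ)

end Shadow

theorem IsPathConnected.setOf_between {X : Type*} [TopologicalSpace X] {L U : X → ℝ}
    (hL : Continuous L) (hU : Continuous U) (h : IsPathConnected {z | L z < U z}) :
    IsPathConnected {p : ℝ × X | L p.2 < p.1 ∧ p.1 < U p.2} := by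
  have himage : {p : ℝ × X | L p.2 < p.1 ∧ p.1 < U p.2} =
      (fun q : X × ℝ => ((1 - q.2) * L q.1 + q.2 * U q.1, q.1)) ''
        ({z | L z < U z} ×ˢ Ioo 0 1) := by
    ext ⟨τ, z⟩
    constructor
    · rintro ⟨hLτ : L z < τ, hτU : τ < U z⟩
      have hLU : 0 < U z - L z := by linarith
      refine ⟨(z, (τ - L z) / (U z - L z)), ⟨show L z < U z by linarith, div_pos (by linarith) hLU,
        (div_lt_one hLU).2 (by linarith)⟩, ?_⟩
      simp only [Prod.mk.injEq, and_true]
      field_simp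
      ring
    · rintro ⟨⟨z, s⟩, ⟨hz, hs₀, hs₁⟩, hq⟩
      obtain ⟨rfl, rfl⟩ := Prod.mk.inj hq
      have hz : L z < U z := hz
      exact ⟨by nlinarith, by nlinarith⟩
  rw [himage]
  exact (h.prod ((convex_Ioo 0 1).isPathConnected (nonempty_Ioo.2 one_pos))).image (by fun_prop)

section Spacetime

variable {X : Type*} [MetricSpace X] {ι : Type*}

def spacelikeSet (t : ι → ℝ) (c : ι → X) : Set (ℝ × X) :=
  {p | ∀ i, |p.1 - t i| < dist p.2 (c i)}

theorem isPathConnected_spacelikeSet [Fintype ι] [Nonempty ι] {t : ι → ℝ} {c : ι → X}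
    (h : IsPathConnected (spacelikeShadow t c)) : IsPathConnected (spacelikeSet t c) := by
  set L : X → ℝ := fun z => Finset.univ.sup' Finset.univ_nonempty fun i => t i - dist z (c i)
  set U : X → ℝ := fun z => Finset.univ.inf' Finset.univ_nonempty fun i => t i + dist z (c i)
  have hS : spacelikeSet t c = {p | L p.2 < p.1 ∧ p.1 < U p.2} := by
    ext ⟨τ, z⟩
    simp only [spacelikeSet, mem_ofPred_eq, L, U, Finset.sup'_lt_iff, Finset.lt_inf'_iff,
      Finset.mem_univ, true_implies]
    constructor
    · intro h
      exact ⟨fun i => by linarith [abs_sub_lt_iff.1 (h i)], fun i => by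
        linarith [abs_sub_lt_iff.1 (h i)]⟩
    · rintro ⟨h₁, h₂⟩ i
      exact abs_sub_lt_iff.2 ⟨by linarith [h₂ i], by linarith [h₁ i]⟩
  have hP : spacelikeShadow t c = {z | L z < U z} := by
    ext z
    simp only [spacelikeShadow, mem_ofPred_eq, L, U, Finset.sup'_lt_iff, Finset.lt_inf'_iff,
      Finset.mem_univ, true_implies]
    constructor
    · intro h i j
      linarith [abs_sub_lt_iff.1 (h i j)]
    · intro h i j
      exact abs_sub_lt_iff.2 ⟨by linarith [h i j, h j i], by linarith [h i j, h j i]⟩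
  rw [hS]
  exact IsPathConnected.setOf_between (by fun_prop) (by fun_prop) (hP ▸ h)

end Spacetime

/-- In Minkowski space `M = ℝ × E` with `dim E ≥ 2`, for any three points the
set of points spacelike separated from all of them is nonempty and
path-connected. -/
theorem stmt_12 {E : Type*} [NormedAddCommGroup E] [InnerProductSpace ℝ E]
    (hdim : 2 ≤ Module.rank ℝ E) (x : Fin 3 → ℝ × E) :
    ({y : ℝ × E | ∀ i, |y.1 - (x i).1| < ‖y.2 - (x i).2‖}).Nonempty ∧
    IsPathConnected {y : ℝ × E | ∀ i, |y.1 - (x i).1| < ‖y.2 - (x i).2‖} := by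
  have hE : 1 < Module.rank ℝ E := Cardinal.one_lt_two.trans_le hdim
  have hS := isPathConnected_spacelikeSet
    (isPathConnected_spacelikeShadow hE (fun i => (x i).1) (fun i => (x i).2))
  have h : {y : ℝ × E | ∀ i, |y.1 - (x i).1| < ‖y.2 - (x i).2‖} =
      spacelikeSet (fun i => (x i).1) (fun i => (x i).2) := by
    simp [spacelikeSet, dist_eq_norm]
  rw [h]
  exact ⟨hS.nonempty, hS⟩
end

section
/- Model Minkowski space as M = ℝ × E, where E is a real inner product space with dim E ≥ 2 (so d ≥ 3). Let x₁, x₂, x₃ ∈ M satisfy: x₁ → x₂, x₃ spacelike separated from x₁, and x₃ spacelike separated from x₂. Then the set F = {x₄ ∈ M : x₁ → x₄, x₃ → x₄, and x₄ spacelike separated from x₂} is nonempty and path-connected. -/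
open scoped RealInnerProductSpace
open Set Filter Convex

/-!
Put the origin at `x₂` and write points as `(x₂.1 + τ, x₂.2 + r • w)` with `‖w‖ = 1`: being
spacelike to `x₂` means `|τ| < r`, and moving along a future-directed causal segment preserves
`x₁ → ·` and `x₃ → ·`. A point `y` of the fiber with direction `u` is first moved along such a
segment, keeping its direction, to radius `R` and time `R - η`. At that time the direction is turned
from `u` to `-e`, where `e` points from `x₃` to `x₂`, along the great circle through `u` and `-e`,
on which `⟪w, e⟫` never exceeds `⟪u, e⟫`. Since `x₃ → y` forces
`⟪u, x₂.2 - x₃.2⟫ < x₂.1 - x₃.1 - η`, this keeps `x₃ → ·` once `R` is large. The endpoints `(R - η, -R • e)`, for `R ≥ ‖x₂.2 - x₃.2‖`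
and small `η > 0`, form a convex family inside the fiber.
-/

theorem one_sub_mul_sub_le_mul_of_sq_eq {a t N : ℝ} (ha₁ : -1 ≤ a) (ha₂ : a ≤ 1) (ht0 : 0 ≤ t)
    (ht1 : t ≤ 1) (hN : 0 ≤ N)
    (hN2 : N ^ 2 = ((1 - t) * a - t) ^ 2 + (1 - t) ^ 2 * (1 - a ^ 2)) :
    (1 - t) * a - t ≤ a * N := by
  have h1a : 0 ≤ 1 - a ^ 2 := by nlinarith
  have key : (a * N) ^ 2 - ((1 - t) * a - t) ^ 2 = (1 - a ^ 2) * t * (2 * a * (1 - t) - t) := by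
    rw [mul_pow, hN2]; ring
  rcases le_or_gt a 0 with ha0 | ha0
  · have hp : (1 - t) * a - t ≤ 0 := by nlinarith
    have : |a * N| ≤ |(1 - t) * a - t| := sq_le_sq.1 <| by
      nlinarith [mul_nonneg (mul_nonneg h1a ht0) (by nlinarith : 0 ≤ t - 2 * a * (1 - t))]
    rw [abs_of_nonpos (mul_nonpos_of_nonpos_of_nonneg ha0 hN), abs_of_nonpos hp] at this
    linarith
  rcases le_or_gt ((1 - t) * a - t) 0 with hp | hp
  · nlinarith [mul_nonneg ha0.le hN]
  · have : |(1 - t) * a - t| ≤ |a * N| := sq_le_sq.1 <| by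
      nlinarith [mul_nonneg (mul_nonneg h1a ht0) (by linarith : 0 ≤ 2 * a * (1 - t) - t)]
    rwa [abs_of_pos hp, abs_of_nonneg (mul_nonneg ha0.le hN)] at this

section SphereCap

variable {E : Type*} [NormedAddCommGroup E] [InnerProductSpace ℝ E]

theorem zero_notMem_segment_neg {u e : E} (hu : ‖u‖ = 1) (he : ‖e‖ = 1) (hue : u ≠ e) :
    (0 : E) ∉ [u -[ℝ] (-e)] := by
  intro h
  have hray : SameRay ℝ u e := by
    simpa [sameRay_neg_iff] using mem_segment_iff_sameRay.1 h
  have hu0 : u ≠ 0 := norm_ne_zero_iff.1 (by simp [hu])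
  have he0 : e ≠ 0 := norm_ne_zero_iff.1 (by simp [he])
  exact hue (by simpa [hu, he] using hray.inv_norm_smul_eq hu0 he0)

theorem inner_le_inner_mul_norm_of_mem_segment_neg {u e w : E} (hu : ‖u‖ = 1) (he : ‖e‖ = 1)
    (hw : w ∈ [u -[ℝ] (-e)]) : ⟪w, e⟫ ≤ ⟪u, e⟫ * ‖w‖ := by
  rw [segment_eq_image] at hw
  obtain ⟨t, ⟨ht0, ht1⟩, rfl⟩ := hw
  set a := ⟪u, e⟫
  have ha : |a| ≤ 1 := by simpa [hu, he] using abs_real_inner_le_norm u e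
  have hinner : ⟪(1 - t) • u + t • -e, e⟫ = (1 - t) * a - t := by
    simp only [inner_add_left, real_inner_smul_left, inner_neg_left, real_inner_self_eq_norm_sq, he]
    ring
  have hnorm : ‖(1 - t) • u + t • -e‖ ^ 2 = ((1 - t) * a - t) ^ 2 + (1 - t) ^ 2 * (1 - a ^ 2) := by
    rw [norm_add_sq_real, norm_smul, norm_smul, norm_neg, hu, he, Real.norm_eq_abs,
      Real.norm_eq_abs, abs_of_nonneg ht0, abs_of_nonneg (sub_nonneg.2 ht1), real_inner_smul_left,
      real_inner_smul_right, inner_neg_right]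
    ring
  rw [hinner]
  exact one_sub_mul_sub_le_mul_of_sq_eq (abs_le.1 ha).1 (abs_le.1 ha).2 ht0 ht1 (norm_nonneg _)
    hnorm

theorem joinedIn_sphere_inner_le {u e : E} (hu : ‖u‖ = 1) (he : ‖e‖ = 1) (hue : u ≠ e) :
    JoinedIn {w | ‖w‖ = 1 ∧ ⟪w, e⟫ ≤ ⟪u, e⟫} u (-e) := by
  have hseg : JoinedIn [u -[ℝ] (-e)] u (-e) := JoinedIn.of_segment_subset subset_rfl
  have hcont : ContinuousOn (fun w : E => ‖w‖⁻¹ • w) [u -[ℝ] (-e)] := by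
    refine ContinuousOn.smul (ContinuousOn.inv₀ (by fun_prop) fun w hw => ?_) continuousOn_id
    exact norm_ne_zero_iff.2 fun h => zero_notMem_segment_neg hu he hue (h ▸ hw)
  have hmap := hseg.map_continuousOn hcont
  simp only [norm_neg, hu, he, inv_one, one_smul] at hmap
  refine hmap.mono ?_
  rintro _ ⟨w, hw, rfl⟩
  have hw0 : w ≠ 0 := fun h => zero_notMem_segment_neg hu he hue (h ▸ hw)
  refine ⟨norm_smul_inv_norm hw0, ?_⟩
  rw [real_inner_smul_left, inv_mul_le_iff₀ (norm_pos_iff.2 hw0), mul_comm]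
  exact inner_le_inner_mul_norm_of_mem_segment_neg hu he hw

end SphereCap

section Minkowski

variable {E : Type*} [NormedAddCommGroup E]

/-- The causal ordering `x → y`. -/
def ChronPrecedes (x y : ℝ × E) : Prop := y.1 - x.1 > ‖y.2 - x.2‖

def Spacelike (x y : ℝ × E) : Prop := |x.1 - y.1| < ‖x.2 - y.2‖

def causalTypeEightFiber (x₁ x₂ x₃ : ℝ × E) : Set (ℝ × E) :=
  {y | ChronPrecedes x₁ y ∧ ChronPrecedes x₃ y ∧ Spacelike y x₂}

theorem ChronPrecedes.trans_causal {x y z : ℝ × E} (hxy : ChronPrecedes x y)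
    (hyz : ‖z.2 - y.2‖ ≤ z.1 - y.1) : ChronPrecedes x z := by
  unfold ChronPrecedes at *
  calc ‖z.2 - x.2‖ ≤ ‖z.2 - y.2‖ + ‖y.2 - x.2‖ := norm_sub_le_norm_sub_add_norm_sub _ _ _
    _ < z.1 - x.1 := by linarith

variable [NormedSpace ℝ E] {x₁ x₂ x₃ : ℝ × E}

theorem joinedIn_causalTypeEightFiber_radial {y : ℝ × E} (hy : y ∈ causalTypeEightFiber x₁ x₂ x₃)
    {u : E} (hu : ‖u‖ = 1) {ρ R σ : ℝ} (hρ : 0 ≤ ρ) (hyu : y.2 = x₂.2 + ρ • u) (hρR : ρ ≤ R)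
    (hσ : y.1 + (R - ρ) ≤ x₂.1 + σ) (hσR : σ < R) :
    JoinedIn (causalTypeEightFiber x₁ x₂ x₃) y (x₂.1 + σ, x₂.2 + R • u) := by
  obtain ⟨h₁, h₃, h₂⟩ := hy
  have hτ : |y.1 - x₂.1| < ρ := by
    simpa [Spacelike, hyu, norm_smul, hu, abs_of_nonneg hρ] using h₂
  refine JoinedIn.of_segment_subset ?_
  rw [segment_eq_image']
  rintro _ ⟨t, ⟨ht0, ht1⟩, rfl⟩
  have hz : y + t • ((x₂.1 + σ, x₂.2 + R • u) - y) =
      (y.1 + t * (x₂.1 + σ - y.1), x₂.2 + (ρ + t * (R - ρ)) • u) := by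
    ext
    · simp
    · simp only [Prod.snd_add, Prod.smul_snd, Prod.snd_sub, hyu]; module
  have hstep : ‖(x₂.2 + (ρ + t * (R - ρ)) • u) - y.2‖ ≤ y.1 + t * (x₂.1 + σ - y.1) - y.1 := by
    rw [hyu, show x₂.2 + (ρ + t * (R - ρ)) • u - (x₂.2 + ρ • u) = (t * (R - ρ)) • u by module,
      norm_smul, hu, mul_one, Real.norm_eq_abs, abs_of_nonneg (by nlinarith)]
    nlinarith
  have hrad : ‖x₂.2 + (ρ + t * (R - ρ)) • u - x₂.2‖ = ρ + t * (R - ρ) := by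
    rw [add_sub_cancel_left, norm_smul, hu, mul_one, Real.norm_eq_abs,
      abs_of_nonneg (by nlinarith)]
  dsimp only
  rw [hz]
  refine ⟨h₁.trans_causal hstep, h₃.trans_causal hstep, ?_⟩
  obtain ⟨hτ₁, hτ₂⟩ := abs_lt.1 hτ
  rw [Spacelike, hrad, abs_lt]
  constructor <;> nlinarith

theorem mem_causalTypeEightFiber_sphere {w : E} (hw : ‖w‖ = 1) {R η : ℝ} (hη : 0 < η)
    (hηR : η < 2 * R) (h₁ : η < x₂.1 - x₁.1 - ‖x₂.2 - x₁.2‖)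
    (h₃ : ‖x₂.2 - x₃.2 + R • w‖ < x₂.1 - x₃.1 + (R - η)) :
    (x₂.1 + (R - η), x₂.2 + R • w) ∈ causalTypeEightFiber x₁ x₂ x₃ := by
  have hRw : ‖R • w‖ = R := by
    rw [norm_smul, hw, mul_one, Real.norm_eq_abs, abs_of_pos (by linarith)]
  refine ⟨?_, ?_, ?_⟩
  · calc ‖x₂.2 + R • w - x₁.2‖ = ‖x₂.2 - x₁.2 + R • w‖ := by rw [add_sub_right_comm]
      _ ≤ ‖x₂.2 - x₁.2‖ + R := (norm_add_le _ _).trans_eq (by rw [hRw])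
      _ < x₂.1 + (R - η) - x₁.1 := by linarith
  · show ‖x₂.2 + R • w - x₃.2‖ < x₂.1 + (R - η) - x₃.1
    rw [add_sub_right_comm]
    linarith
  · rw [Spacelike, add_sub_cancel_left, add_sub_cancel_left, hRw, abs_lt]
    constructor <;> linarith

end Minkowski

section InnerProductMinkowski

variable {E : Type*} [NormedAddCommGroup E] [InnerProductSpace ℝ E] {x₁ x₂ x₃ : ℝ × E}

theorem joinedIn_causalTypeEightFiber_sphere {u e : E} (hu : ‖u‖ = 1) (he : ‖e‖ = 1) (hue : u ≠ e)
    {ρ₃ R η : ℝ} (hρ₃ : 0 ≤ ρ₃) (hv : x₂.2 - x₃.2 = ρ₃ • e) (hη : 0 < η) (hηR : η < 2 * R)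
    (h₁ : η < x₂.1 - x₁.1 - ‖x₂.2 - x₁.2‖) (hc : 0 < x₂.1 - x₃.1 + (R - η))
    (h₃ : ρ₃ ^ 2 + 2 * R * ⟪u, x₂.2 - x₃.2⟫ + R ^ 2 < (x₂.1 - x₃.1 + (R - η)) ^ 2) :
    JoinedIn (causalTypeEightFiber x₁ x₂ x₃)
      (x₂.1 + (R - η), x₂.2 + R • u) (x₂.1 + (R - η), x₂.2 + R • (-e)) := by
  refine ((joinedIn_sphere_inner_le hu he hue).map
    (f := fun w => (x₂.1 + (R - η), x₂.2 + R • w)) (by fun_prop)).mono ?_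
  rintro _ ⟨w, ⟨hw, hwe⟩, rfl⟩
  refine mem_causalTypeEightFiber_sphere hw hη hηR h₁ (lt_of_pow_lt_pow_left₀ 2 hc.le ?_)
  have hwv : ⟪w, x₂.2 - x₃.2⟫ ≤ ⟪u, x₂.2 - x₃.2⟫ := by
    rw [hv, real_inner_smul_right, real_inner_smul_right]
    exact mul_le_mul_of_nonneg_left hwe hρ₃
  have hnorm : ‖x₂.2 - x₃.2 + R • w‖ ^ 2 = ρ₃ ^ 2 + 2 * R * ⟪w, x₂.2 - x₃.2⟫ + R ^ 2 := by
    rw [norm_add_sq_real, real_inner_smul_right, real_inner_comm, norm_smul, hw, hv, norm_smul,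
      he, Real.norm_eq_abs, Real.norm_eq_abs, abs_of_nonneg hρ₃, mul_one, mul_one, sq_abs]
    ring
  rw [hnorm]
  nlinarith

theorem exists_joinedIn_causalTypeEightFiber_anchor {e : E} (he : ‖e‖ = 1) {ρ₃ : ℝ}
    (hρ₃ : 0 ≤ ρ₃) (hv : x₂.2 - x₃.2 = ρ₃ • e) (hΔ : x₂.1 - x₃.1 < ρ₃) {η₀ : ℝ} (hη₀ : 0 < η₀)
    (hη₀₁ : η₀ ≤ x₂.1 - x₁.1 - ‖x₂.2 - x₁.2‖) {y : ℝ × E}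
    (hy : y ∈ causalTypeEightFiber x₁ x₂ x₃) :
    ∃ R η, ρ₃ ≤ R ∧ 0 < η ∧ η < η₀ ∧
      JoinedIn (causalTypeEightFiber x₁ x₂ x₃) y (x₂.1 + (R - η), x₂.2 + R • (-e)) := by
  set ρ := ‖y.2 - x₂.2‖
  have hτ : |y.1 - x₂.1| < ρ := hy.2.2
  have hρ : 0 < ρ := (abs_nonneg _).trans_lt hτ
  obtain ⟨hτ₁, hτ₂⟩ := abs_lt.1 hτ
  set u := ρ⁻¹ • (y.2 - x₂.2)
  have hu : ‖u‖ = 1 := norm_smul_inv_norm (norm_pos_iff.1 hρ)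
  have hyu : y.2 = x₂.2 + ρ • u := by rw [smul_inv_smul₀ hρ.ne', add_sub_cancel]
  set η := min (η₀ / 2) (ρ - (y.1 - x₂.1))
  have hη : 0 < η := lt_min (by linarith) (by linarith)
  have hηη₀ : η < η₀ := (min_le_left _ _).trans_lt (by linarith)
  have hηy : η ≤ ρ - (y.1 - x₂.1) := min_le_right _ _
  have hv' : ‖x₂.2 - x₃.2‖ = ρ₃ := by
    rw [hv, norm_smul, he, mul_one, Real.norm_eq_abs, abs_of_nonneg hρ₃]
  have hA : ⟪u, x₂.2 - x₃.2⟫ < x₂.1 - x₃.1 - η := by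
    have hyx₃ : y.2 - x₃.2 = ρ • u + (x₂.2 - x₃.2) := by rw [hyu]; abel
    have : ρ + ⟪u, x₂.2 - x₃.2⟫ ≤ ‖y.2 - x₃.2‖ := by
      calc ρ + ⟪u, x₂.2 - x₃.2⟫ = ⟪u, y.2 - x₃.2⟫ := by
            rw [hyx₃, inner_add_right, real_inner_smul_right, real_inner_self_eq_norm_sq, hu]
            ring
        _ ≤ ‖y.2 - x₃.2‖ := (real_inner_le_norm _ _).trans_eq (by rw [hu, one_mul])
    have := hy.2.1
    unfold ChronPrecedes at this
    linarith
  have hAρ₃ : -ρ₃ ≤ ⟪u, x₂.2 - x₃.2⟫ := by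
    simpa [hu, hv'] using neg_le_of_abs_le (abs_real_inner_le_norm u (x₂.2 - x₃.2))
  have hue : u ≠ e := by
    rintro rfl
    have : ⟪u, x₂.2 - x₃.2⟫ = ρ₃ := by
      rw [hv, real_inner_smul_right, real_inner_self_eq_norm_sq, hu]; ring
    linarith
  obtain ⟨R, hρR, hρ₃R, hR⟩ := ((eventually_ge_atTop ρ).and ((eventually_ge_atTop ρ₃).and
    ((tendsto_id.const_mul_atTop (sub_pos.2 hA)).eventually_gt_atTop (ρ₃ ^ 2)))).exists
  refine ⟨R, η, hρ₃R, hη, hηη₀, ?_⟩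
  refine (joinedIn_causalTypeEightFiber_radial hy hu hρ.le hyu hρR (σ := R - η) (by linarith)
    (by linarith)).trans ?_
  refine joinedIn_causalTypeEightFiber_sphere hu he hue hρ₃ hv hη (by linarith) (by linarith)
    (by linarith) ?_
  simp only [id] at hR
  nlinarith

theorem isPathConnected_causalTypeEightFiber (h12 : ChronPrecedes x₁ x₂) (h23 : Spacelike x₂ x₃) :
    IsPathConnected (causalTypeEightFiber x₁ x₂ x₃) := by
  set ρ₃ := ‖x₂.2 - x₃.2‖
  have hρ₃ : 0 < ρ₃ := (abs_nonneg _).trans_lt h23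
  obtain ⟨hΔ₁, hΔ₂⟩ := abs_lt.1 h23
  set e := ρ₃⁻¹ • (x₂.2 - x₃.2)
  have he : ‖e‖ = 1 := norm_smul_inv_norm (norm_pos_iff.1 hρ₃)
  have hv : x₂.2 - x₃.2 = ρ₃ • e := (smul_inv_smul₀ hρ₃.ne' _).symm
  set η₀ := min (x₂.1 - x₁.1 - ‖x₂.2 - x₁.2‖) (x₂.1 - x₃.1 + ρ₃)
  have hη₀ : 0 < η₀ := lt_min (by unfold ChronPrecedes at h12; linarith) (by linarith)
  set anchor : ℝ × ℝ → ℝ × E := fun p => (x₂.1 + (p.1 - p.2), x₂.2 + p.1 • (-e))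
  set K : Set (ℝ × ℝ) := Ici ρ₃ ×ˢ Ioo 0 η₀
  have hK : IsPathConnected (anchor '' K) :=
    (((convex_Ici _).prod (convex_Ioo _ _)).isPathConnected
      (show K.Nonempty from ⟨(ρ₃, η₀ / 2), self_mem_Ici, half_pos hη₀, half_lt_self hη₀⟩)).image
      (by fun_prop)
  have hKF : anchor '' K ⊆ causalTypeEightFiber x₁ x₂ x₃ := by
    rintro _ ⟨⟨R, η⟩, ⟨hR, hη, hηη₀⟩, rfl⟩
    have hηΔ : η < x₂.1 - x₃.1 + ρ₃ := hηη₀.trans_le (min_le_right _ _)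
    refine mem_causalTypeEightFiber_sphere (norm_neg e ▸ he) hη (by linarith [mem_Ici.1 hR])
      (hηη₀.trans_le (min_le_left _ _)) ?_
    rw [hv, smul_neg, ← sub_eq_add_neg, ← sub_smul, norm_smul, he, mul_one, Real.norm_eq_abs,
      abs_of_nonpos (sub_nonpos.2 hR)]
    linarith
  obtain ⟨b, hb, hbK⟩ := hK
  refine ⟨b, hKF hb, fun y hy => ?_⟩
  obtain ⟨R, η, hR, hη, hηη₀, hyR⟩ := exists_joinedIn_causalTypeEightFiber_anchor he hρ₃.le hv
    hΔ₂ hη₀ (min_le_left _ _) hy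
  exact ((hbK ⟨(R, η), ⟨hR, hη, hηη₀⟩, rfl⟩).mono hKF).trans hyR.symm

end InnerProductMinkowski

theorem stmt_13_general {E : Type*} [NormedAddCommGroup E] [InnerProductSpace ℝ E]
    (x₁ x₂ x₃ : ℝ × E)
    (h12 : x₂.1 - x₁.1 > ‖x₂.2 - x₁.2‖)
    (h23 : |x₂.1 - x₃.1| < ‖x₂.2 - x₃.2‖) :
    ({y : ℝ × E | y.1 - x₁.1 > ‖y.2 - x₁.2‖ ∧ y.1 - x₃.1 > ‖y.2 - x₃.2‖ ∧
        |y.1 - x₂.1| < ‖y.2 - x₂.2‖}).Nonempty ∧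
    IsPathConnected {y : ℝ × E | y.1 - x₁.1 > ‖y.2 - x₁.2‖ ∧ y.1 - x₃.1 > ‖y.2 - x₃.2‖ ∧
        |y.1 - x₂.1| < ‖y.2 - x₂.2‖} :=
  have h := isPathConnected_causalTypeEightFiber (x₁ := x₁) (x₂ := x₂) (x₃ := x₃) h12 h23
  ⟨h.nonempty, h⟩

/-- Fiber connectedness for causal Type 8: in Minkowski space `ℝ × E` with
`dim E ≥ 2`, if `x₁ → x₂`, `x₃` spacelike from `x₁` and from `x₂`, then the set
of points `x₄` with `x₁ → x₄`, `x₃ → x₄`, and `x₄` spacelike from `x₂` is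
nonempty and path-connected. -/
theorem stmt_13 {E : Type*} [NormedAddCommGroup E] [InnerProductSpace ℝ E]
    (hdim : 2 ≤ Module.rank ℝ E) (x₁ x₂ x₃ : ℝ × E)
    (h12 : x₂.1 - x₁.1 > ‖x₂.2 - x₁.2‖)
    (h13 : |x₁.1 - x₃.1| < ‖x₁.2 - x₃.2‖)
    (h23 : |x₂.1 - x₃.1| < ‖x₂.2 - x₃.2‖) :
    ({y : ℝ × E | y.1 - x₁.1 > ‖y.2 - x₁.2‖ ∧ y.1 - x₃.1 > ‖y.2 - x₃.2‖ ∧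
        |y.1 - x₂.1| < ‖y.2 - x₂.2‖}).Nonempty ∧
    IsPathConnected {y : ℝ × E | y.1 - x₁.1 > ‖y.2 - x₁.2‖ ∧ y.1 - x₃.1 > ‖y.2 - x₃.2‖ ∧
        |y.1 - x₂.1| < ‖y.2 - x₂.2‖} :=
  stmt_13_general x₁ x₂ x₃ h12 h23
end

section
/- Let x₁, …, xₙ be points in two-dimensional Minkowski space M = ℝ × ℝ, x_k = (t_k, 𝐱_k), which are pairwise spacelike separated. Then there exists a permutation σ of {1, …, n} such that both lightcone coordinates w_k = 𝐱_{σ(k)} + t_{σ(k)} and w̄_k = 𝐱_{σ(k)} − t_{σ(k)} are strictly increasing in k; consequently, for all λ₁, …, λ_{n−1} ≥ 0 not all zero, the vector Σ_{k=1}^{n−1} λ_k (x_{σ(k+1)} − x_{σ(k)}) is nonzero and spacelike. -/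
/-!
Sorting the points by their spatial coordinate makes each pair `x_{σ i}, x_{σ j}` with `i < j`
satisfy `|Δt| < Δ𝐱`, i.e. both lightcone coordinates increase along the sorted family. Both
lightcone coordinates are linear, so they are positive on every nonzero nonnegative combination
of consecutive differences, and a vector with `w > 0` and `w̄ > 0` is spacelike.
-/

open Finset

theorem LinearMap.pos_apply_sum_smul_succ_sub {E : Type*} [AddCommGroup E] [Module ℝ E]
    {n : ℕ} (φ : E →ₗ[ℝ] ℝ) (y : Fin (n + 1) → E) (hφy : StrictMono (φ ∘ y))
    (l : Fin n → ℝ) (hl : ∀ k, 0 ≤ l k) (hl0 : ∃ k, l k ≠ 0) :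
    0 < φ (∑ k, l k • (y k.succ - y k.castSucc)) := by
  obtain ⟨k₀, hk₀⟩ := hl0
  have hstep : ∀ k : Fin n, 0 < φ (y k.succ) - φ (y k.castSucc) := fun k =>
    sub_pos.2 (hφy (Fin.castSucc_lt_succ (i := k)))
  simp only [map_sum, map_smul, map_sub, smul_eq_mul]
  exact sum_pos' (fun k _ => mul_nonneg (hl k) (hstep k).le)
    ⟨k₀, mem_univ _, mul_pos ((hl k₀).lt_of_ne' hk₀) (hstep k₀)⟩

namespace Minkowski2

/-- Lightcone coordinates `w = 𝐱 + t` and `w̄ = 𝐱 - t` of the point `(t, 𝐱)`. -/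
def lightconeW : ℝ × ℝ →ₗ[ℝ] ℝ := LinearMap.snd ℝ ℝ ℝ + LinearMap.fst ℝ ℝ ℝ

def lightconeWBar : ℝ × ℝ →ₗ[ℝ] ℝ := LinearMap.snd ℝ ℝ ℝ - LinearMap.fst ℝ ℝ ℝ

@[simp] lemma lightconeW_apply (p : ℝ × ℝ) : lightconeW p = p.2 + p.1 := rfl

@[simp] lemma lightconeWBar_apply (p : ℝ × ℝ) : lightconeWBar p = p.2 - p.1 := rfl

lemma abs_fst_lt_abs_snd_of_lightcone_pos {v : ℝ × ℝ} (hw : 0 < lightconeW v)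
    (hwbar : 0 < lightconeWBar v) : |v.1| < |v.2| := by
  simp only [lightconeW_apply, lightconeWBar_apply] at hw hwbar
  rw [abs_of_pos (show 0 < v.2 by linarith), abs_lt]
  constructor <;> linarith

lemma lightcone_lt_of_snd_lt {p q : ℝ × ℝ} (hpq : p.2 < q.2)
    (hsp : |p.1 - q.1| < |p.2 - q.2|) :
    lightconeW p < lightconeW q ∧ lightconeWBar p < lightconeWBar q := by
  rw [abs_sub_comm p.2, abs_of_pos (sub_pos.2 hpq), abs_lt] at hsp
  simp only [lightconeW_apply, lightconeWBar_apply]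
  constructor <;> linarith [hsp.1, hsp.2]

theorem exists_perm_strictMono_lightcone {m : ℕ} (x : Fin m → ℝ × ℝ)
    (hsp : ∀ i j, i ≠ j → |(x i).1 - (x j).1| < |(x i).2 - (x j).2|) :
    ∃ σ : Equiv.Perm (Fin m),
      StrictMono (lightconeW ∘ x ∘ σ) ∧ StrictMono (lightconeWBar ∘ x ∘ σ) := by
  have hf : Function.Injective (Prod.snd ∘ x) := by
    intro i j (hij : (x i).2 = (x j).2)
    by_contra hne
    have h := hsp i j hne
    rw [sub_eq_zero.2 hij, abs_zero] at h
    exact (abs_nonneg _).not_gt h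
  set σ := Tuple.sort (Prod.snd ∘ x)
  have hsorted : StrictMono (Prod.snd ∘ x ∘ σ) :=
    (Tuple.monotone_sort _).strictMono_of_injective (hf.comp σ.injective)
  have hlt : ∀ ⦃i j⦄, i < j → lightconeW (x (σ i)) < lightconeW (x (σ j)) ∧
      lightconeWBar (x (σ i)) < lightconeWBar (x (σ j)) := fun i j hij =>
    lightcone_lt_of_snd_lt (hsorted hij) (hsp (σ i) (σ j) (σ.injective.ne hij.ne))
  exact ⟨σ, fun i j hij => (hlt hij).1, fun i j hij => (hlt hij).2⟩

end Minkowski2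

open Minkowski2 in
/-- In 2d Minkowski space, any family of pairwise spacelike separated points can
be permuted so that both lightcone coordinates `w = 𝐱 + t` and `w̄ = 𝐱 - t` are
strictly increasing; consequently every nonzero nonnegative combination of the
consecutive differences is a nonzero spacelike vector. -/
theorem stmt_15 (n : ℕ) (x : Fin (n + 1) → ℝ × ℝ)
    (hsp : ∀ i j, i ≠ j → |(x i).1 - (x j).1| < |(x i).2 - (x j).2|) :
    ∃ σ : Equiv.Perm (Fin (n + 1)),
      StrictMono (fun k => (x (σ k)).2 + (x (σ k)).1) ∧
      StrictMono (fun k => (x (σ k)).2 - (x (σ k)).1) ∧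
      ∀ l : Fin n → ℝ, (∀ k, 0 ≤ l k) → (∃ k, l k ≠ 0) →
        (∑ k, l k • (x (σ k.succ) - x (σ k.castSucc))) ≠ 0 ∧
        |(∑ k, l k • (x (σ k.succ) - x (σ k.castSucc))).1| <
          |(∑ k, l k • (x (σ k.succ) - x (σ k.castSucc))).2| := by
  obtain ⟨σ, hw, hwbar⟩ := exists_perm_strictMono_lightcone x hsp
  refine ⟨σ, hw, hwbar, fun l hl hl0 => ?_⟩
  have hspacelike := abs_fst_lt_abs_snd_of_lightcone_pos
    (lightconeW.pos_apply_sum_smul_succ_sub (x ∘ σ) hw l hl hl0)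
    (lightconeWBar.pos_apply_sum_smul_succ_sub (x ∘ σ) hwbar l hl hl0)
  exact ⟨fun h => by simp [h] at hspacelike, hspacelike⟩
end

section
/- Model Minkowski space as M = ℝ × E, where E is a real inner product space. Let x₁, x₂, x₃ ∈ M be pairwise spacelike separated. Then there exists a permutation σ of {1, 2, 3} such that for all λ₁, λ₂ ≥ 0 with (λ₁, λ₂) ≠ (0, 0), the vector λ₁ (x_{σ(2)} − x_{σ(1)}) + λ₂ (x_{σ(3)} − x_{σ(2)}) is nonzero and spacelike. -/
/-!
With `Q p = minkowskiForm p p` (signature `(-, +, …, +)`), a vector is spacelike iff `Q > 0`.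
On the cone spanned by spacelike `a`, `b` the form is `l₁² Q a + 2 l₁ l₂ B + l₂² Q b` with
`B = minkowskiForm a b`, which stays positive as soon as `B > -Q a` and `B > -Q b`.
For `u = x₁ - x₀`, `v = x₂ - x₁` this can only fail if `B ≤ -Q u` or `B ≤ -Q v`; then the orders
`(x₁, x₀, x₂)`, resp. `(x₀, x₂, x₁)`, have consecutive differences `(-u, u + v)`, resp.
`(u + v, -v)`, whose mutual form `-(Q u + B)`, resp. `-(B + Q v)`, is nonnegative, and
`u + v = x₂ - x₀` is spacelike.
-/

open RealInnerProductSpace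

section Minkowski

variable {E : Type*} [NormedAddCommGroup E] [InnerProductSpace ℝ E]

def minkowskiForm (p q : ℝ × E) : ℝ := ⟪p.2, q.2⟫ - p.1 * q.1

def IsSpacelike (p : ℝ × E) : Prop := |p.1| < ‖p.2‖

lemma isSpacelike_iff_minkowskiForm_pos (p : ℝ × E) :
    IsSpacelike p ↔ 0 < minkowskiForm p p := by
  rw [IsSpacelike, minkowskiForm, real_inner_self_eq_norm_sq, sub_pos, ← sq, ← abs_norm, sq_lt_sq,
    abs_abs]

omit [InnerProductSpace ℝ E] in
lemma IsSpacelike.ne_zero {p : ℝ × E} (hp : IsSpacelike p) : p ≠ 0 := by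
  rintro rfl
  simp [IsSpacelike] at hp

omit [InnerProductSpace ℝ E] in
lemma IsSpacelike.neg {p : ℝ × E} (hp : IsSpacelike p) : IsSpacelike (-p) := by
  simpa [IsSpacelike] using hp

lemma minkowskiForm_neg_neg (p : ℝ × E) : minkowskiForm (-p) (-p) = minkowskiForm p p := by
  simp [minkowskiForm]

lemma minkowskiForm_smul_add_smul_self (a b : ℝ × E) (l₁ l₂ : ℝ) :
    minkowskiForm (l₁ • a + l₂ • b) (l₁ • a + l₂ • b) =
      l₁ ^ 2 * minkowskiForm a a + 2 * l₁ * l₂ * minkowskiForm a b +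
        l₂ ^ 2 * minkowskiForm b b := by
  simp only [minkowskiForm, Prod.fst_add, Prod.snd_add, Prod.smul_fst, Prod.smul_snd, smul_eq_mul,
    inner_add_left, inner_add_right, real_inner_smul_left, real_inner_smul_right,
    real_inner_comm a.2 b.2]
  ring

structure IsJostPair (a b : ℝ × E) : Prop where
  isSpacelike_left : IsSpacelike a
  isSpacelike_right : IsSpacelike b
  neg_form_left_lt : -minkowskiForm a a < minkowskiForm a b
  neg_form_right_lt : -minkowskiForm b b < minkowskiForm a b

theorem IsJostPair.isSpacelike_smul_add_smul {a b : ℝ × E} (h : IsJostPair a b) {l₁ l₂ : ℝ}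
    (h₁ : 0 ≤ l₁) (h₂ : 0 ≤ l₂) (hne : (l₁, l₂) ≠ (0, 0)) : IsSpacelike (l₁ • a + l₂ • b) := by
  have hA := (isSpacelike_iff_minkowskiForm_pos a).1 h.isSpacelike_left
  have hB := (isSpacelike_iff_minkowskiForm_pos b).1 h.isSpacelike_right
  have hAC := h.neg_form_left_lt
  have hBC := h.neg_form_right_lt
  rw [isSpacelike_iff_minkowskiForm_pos, minkowskiForm_smul_add_smul_self]
  set A := minkowskiForm a a
  set B := minkowskiForm b b
  set C := minkowskiForm a b
  have hl : 0 < l₁ ^ 2 ∨ 0 < l₂ ^ 2 := by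
    by_contra! hl
    exact hne (by simp only [Prod.mk.injEq]; constructor <;> nlinarith [sq_nonneg l₁, sq_nonneg l₂])
  rcases le_or_gt 0 C with hC | hC
  · have : 0 ≤ 2 * l₁ * l₂ * C := by positivity
    rcases hl with hl | hl
    · nlinarith [mul_pos hl hA, mul_nonneg (sq_nonneg l₂) hB.le]
    · nlinarith [mul_pos hl hB, mul_nonneg (sq_nonneg l₁) hA.le]
  · -- for `C < 0` the form is a positive combination of `A + C`, `B + C` and `-C`
    have : l₁ ^ 2 * A + 2 * l₁ * l₂ * C + l₂ ^ 2 * B =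
        l₁ ^ 2 * (A + C) + l₂ ^ 2 * (B + C) + -C * (l₁ - l₂) ^ 2 := by ring
    have hAC' : 0 < A + C := by linarith
    have hBC' : 0 < B + C := by linarith
    have : 0 ≤ -C * (l₁ - l₂) ^ 2 := by nlinarith [sq_nonneg (l₁ - l₂)]
    rcases hl with hl | hl
    · nlinarith [mul_pos hl hAC', mul_nonneg (sq_nonneg l₂) hBC'.le]
    · nlinarith [mul_pos hl hBC', mul_nonneg (sq_nonneg l₁) hAC'.le]

lemma isJostPair_or_of_isSpacelike {u v : ℝ × E} (hu : IsSpacelike u) (hv : IsSpacelike v)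
    (huv : IsSpacelike (u + v)) :
    IsJostPair u v ∨ IsJostPair (-u) (u + v) ∨ IsJostPair (u + v) (-v) := by
  have hA := (isSpacelike_iff_minkowskiForm_pos u).1 hu
  have hB := (isSpacelike_iff_minkowskiForm_pos v).1 hv
  have hAB := (isSpacelike_iff_minkowskiForm_pos (u + v)).1 huv
  have h₁ : minkowskiForm (-u) (u + v) = -(minkowskiForm u u + minkowskiForm u v) := by
    simp only [minkowskiForm, Prod.fst_neg, Prod.snd_neg, Prod.fst_add, Prod.snd_add,
      inner_neg_left, inner_add_right]
    ring
  have h₂ : minkowskiForm (u + v) (-v) = -(minkowskiForm u v + minkowskiForm v v) := by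
    simp only [minkowskiForm, Prod.fst_neg, Prod.snd_neg, Prod.fst_add, Prod.snd_add,
      inner_neg_right, inner_add_left]
    ring
  by_cases hleft : -minkowskiForm u u < minkowskiForm u v
  · by_cases hright : -minkowskiForm v v < minkowskiForm u v
    · exact .inl ⟨hu, hv, hleft, hright⟩
    · refine .inr (.inr ⟨huv, hv.neg, ?_, ?_⟩) <;>
      simp only [h₂, minkowskiForm_neg_neg] <;> linarith
  · refine .inr (.inl ⟨hu.neg, huv, ?_, ?_⟩) <;>
      simp only [h₁, minkowskiForm_neg_neg] <;> linarith

end Minkowski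

/-- Any totally spacelike three-point configuration in Minkowski space
`ℝ × E` becomes, after a suitable permutation, a Jost configuration: every
nonzero nonnegative combination of the consecutive differences is a nonzero
spacelike vector. -/
theorem stmt_16 {E : Type*} [NormedAddCommGroup E] [InnerProductSpace ℝ E]
    (x : Fin 3 → ℝ × E)
    (hsp : ∀ i j, i ≠ j → |(x i).1 - (x j).1| < ‖(x i).2 - (x j).2‖) :
    ∃ σ : Equiv.Perm (Fin 3), ∀ l₁ l₂ : ℝ, 0 ≤ l₁ → 0 ≤ l₂ → (l₁, l₂) ≠ (0, 0) →
      l₁ • (x (σ 1) - x (σ 0)) + l₂ • (x (σ 2) - x (σ 1)) ≠ 0 ∧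
      |(l₁ • (x (σ 1) - x (σ 0)) + l₂ • (x (σ 2) - x (σ 1))).1| <
        ‖(l₁ • (x (σ 1) - x (σ 0)) + l₂ • (x (σ 2) - x (σ 1))).2‖ := by
  have hx : ∀ i j, i ≠ j → IsSpacelike (x i - x j) := hsp
  have hsum : x 1 - x 0 + (x 2 - x 1) = x 2 - x 0 := by abel
  obtain ⟨σ, hσ⟩ :
      ∃ σ : Equiv.Perm (Fin 3), IsJostPair (x (σ 1) - x (σ 0)) (x (σ 2) - x (σ 1)) := by
    rcases isJostPair_or_of_isSpacelike (hx 1 0 (by decide)) (hx 2 1 (by decide))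
      (hsum ▸ hx 2 0 (by decide)) with h | h | h
    · exact ⟨1, h⟩
    · refine ⟨Equiv.swap 0 1, ?_⟩
      simpa [Equiv.swap_apply_of_ne_of_ne, hsum] using h
    · refine ⟨Equiv.swap 1 2, ?_⟩
      simpa [Equiv.swap_apply_of_ne_of_ne, hsum] using h
  refine ⟨σ, fun l₁ l₂ h₁ h₂ hne => ?_⟩
  have := hσ.isSpacelike_smul_add_smul h₁ h₂ hne
  exact ⟨this.ne_zero, this⟩
end

section
/- Let R be a commutative ring, V an R-module, and B : V × V → R a symmetric bilinear form with associated quadratic values Q(x) = B(x, x). Fix b ∈ V and set σ(x) = 1 − 2 B(b, x) + Q(b) Q(x). Suppose x, y ∈ V are such that σ(x) and σ(y) are invertible in R, and define x′ = σ(x)⁻¹ • (x − Q(x) • b) and y′ = σ(y)⁻¹ • (y − Q(y) • b). Then Q(x′ − y′) = σ(x)⁻¹ σ(y)⁻¹ Q(x − y). -/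
/-!
Write `x' = σ(x)⁻¹ • φ(x)` with `φ(x) = x - Q(x) • b`. Expanding shows `Q(φ(x)) = σ(x) Q(x)`, so
`Q(x' - y') = σ(x)⁻¹ Q(x) + σ(y)⁻¹ Q(y) - 2 σ(x)⁻¹ σ(y)⁻¹ B(φ(x), φ(y))`. After multiplying by
`σ(x) σ(y)`, all terms involving `b` cancel and `Q(x) + Q(y) - 2 B(x, y) = Q(x - y)` remains.
-/

namespace LinearMap

variable {R V : Type*} [CommRing R] [AddCommGroup V] [Module R V] (B : V →ₗ[R] V →ₗ[R] R)

theorem apply_invOf_smul_sub_invOf_smul (hB : ∀ u w : V, B u w = B w u)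
    (u v : V) (s t : R) [Invertible s] [Invertible t] :
    B (⅟s • u - ⅟t • v) (⅟s • u - ⅟t • v)
      = ⅟s * ⅟s * B u u + ⅟t * ⅟t * B v v - 2 * ⅟s * ⅟t * B u v := by
  simp only [map_sub, map_smul, sub_apply, smul_apply, smul_eq_mul]
  rw [hB v u]
  ring

theorem apply_sub_smul_self (hB : ∀ u w : V, B u w = B w u) (b x : V) :
    B (x - B x x • b) (x - B x x • b) = (1 - 2 * B b x + B b b * B x x) * B x x := by
  simp only [map_sub, map_smul, sub_apply, smul_apply, smul_eq_mul]
  rw [hB x b]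
  ring

theorem apply_sub_smul_cross (hB : ∀ u w : V, B u w = B w u) (b x y : V) :
    (1 - 2 * B b y + B b b * B y y) * B x x + (1 - 2 * B b x + B b b * B x x) * B y y
      - 2 * B (x - B x x • b) (y - B y y • b) = B (x - y) (x - y) := by
  simp only [map_sub, map_smul, sub_apply, smul_apply, smul_eq_mul]
  rw [hB x b, hB y x]
  ring

end LinearMap

/-- Transformation law of squared separations under a special conformal
transformation with parameter `b` for a symmetric bilinear form `B` over a
commutative ring: with `σ(x) = 1 - 2B(b,x) + Q(b)Q(x)` invertible and
`x' = σ(x)⁻¹ • (x - Q(x) • b)`, one has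
`Q(x' - y') = σ(x)⁻¹ σ(y)⁻¹ Q(x - y)`. -/
theorem stmt_17 {R : Type*} [CommRing R] {V : Type*} [AddCommGroup V] [Module R V]
    (B : V →ₗ[R] V →ₗ[R] R) (hB : ∀ u w : V, B u w = B w u)
    (b x y : V) (sx sy : R)
    (hsx : sx = 1 - 2 * B b x + B b b * B x x)
    (hsy : sy = 1 - 2 * B b y + B b b * B y y)
    [Invertible sx] [Invertible sy] :
    B (⅟sx • (x - B x x • b) - ⅟sy • (y - B y y • b))
      (⅟sx • (x - B x x • b) - ⅟sy • (y - B y y • b))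
      = ⅟sx * ⅟sy * B (x - y) (x - y) := by
  rw [B.apply_invOf_smul_sub_invOf_smul hB, B.apply_sub_smul_self hB, B.apply_sub_smul_self hB,
    ← B.apply_sub_smul_cross hB, ← hsx, ← hsy]
  linear_combination (⅟sx * B x x - ⅟sy * B y y) * (invOf_mul_self sx - invOf_mul_self sy)
end

section
/- Let Δ > 0 be real and let r, s ∈ [0, 1] with r = 1 or s = 1. Then the family of nonnegative real numbers indexed by (m, n) ∈ ℕ × ℕ with terms (1 + (−1)^{m+n}) · Γ(Δ+m) Γ(Δ+n) / (m! · n! · Γ(Δ)²) · r^m s^n is not summable (the double series diverges). -/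
/-!
Write `c m = Γ(Δ + m) / (m! Γ(Δ))`, so that the `(m, n)` term is
`(1 + (-1)^(m+n)) c m c n r^m s^n`. From `c (m + 1) = c m (Δ + m) / (m + 1)` the sequence `m c m`
is nondecreasing, hence `c m ≥ Δ / m`. If `r = 1`, the terms at `(2k, 0)` equal `2 c (2k) ≥ Δ / k`,
a harmonic series; the case `s = 1` is symmetric.
-/

open Nat

noncomputable section

/-- `(Δ)_m / m!`, written through the Gamma function. -/
def pochhammerCoeff (Δ : ℝ) (m : ℕ) : ℝ :=
  Real.Gamma (Δ + m) / (m ! * Real.Gamma Δ)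

namespace pochhammerCoeff

variable {Δ : ℝ}

theorem zero (hΔ : Real.Gamma Δ ≠ 0) : pochhammerCoeff Δ 0 = 1 := by
  simp [pochhammerCoeff, hΔ]

theorem succ (m : ℕ) (h : Δ + m ≠ 0) :
    pochhammerCoeff Δ (m + 1) = pochhammerCoeff Δ m * (Δ + m) / (m + 1) := by
  have hΓ : Real.Gamma (Δ + (m + 1)) = (Δ + m) * Real.Gamma (Δ + m) := by
    rw [← add_assoc, Real.Gamma_add_one h]
  simp only [pochhammerCoeff, factorial_succ, cast_mul, cast_succ, hΓ]
  field_simp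

theorem pos (hΔ : 0 < Δ) (m : ℕ) : 0 < pochhammerCoeff Δ m := by
  unfold pochhammerCoeff
  have := Real.Gamma_pos_of_pos hΔ
  have := Real.Gamma_pos_of_pos (by positivity : 0 < Δ + m)
  positivity

theorem le_mul_self (hΔ : 0 < Δ) {m : ℕ} (hm : 1 ≤ m) : Δ ≤ m * pochhammerCoeff Δ m := by
  induction m, hm using Nat.le_induction with
  | base =>
    have := succ 0 (by simpa using hΔ.ne')
    simp [this, zero (Real.Gamma_pos_of_pos hΔ).ne']
  | succ m _ ih =>
    have hc := pos hΔ m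
    calc Δ ≤ m * pochhammerCoeff Δ m := ih
      _ ≤ pochhammerCoeff Δ m * (Δ + m) := by nlinarith
      _ = (m + 1 : ℕ) * pochhammerCoeff Δ (m + 1) := by
        rw [succ m (by positivity)]; push_cast; field_simp

/-- At `m = 0` this holds because `Δ / 0 = 0`. -/
theorem div_le (hΔ : 0 < Δ) (m : ℕ) : Δ / m ≤ pochhammerCoeff Δ m := by
  rcases Nat.eq_zero_or_pos m with rfl | hm
  · simpa using (pos hΔ 0).le
  · rw [div_le_iff₀ (by positivity), mul_comm]
    exact le_mul_self hΔ hm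

theorem not_summable_even (hΔ : 0 < Δ) : ¬ Summable fun k : ℕ => pochhammerCoeff Δ (2 * k) := by
  intro hsum
  have harmonic : Summable fun k : ℕ => Δ / 2 * (k : ℝ)⁻¹ :=
    hsum.of_nonneg_of_le (fun k => by positivity) fun k => by
      calc Δ / 2 * (k : ℝ)⁻¹ = Δ / (2 * k : ℕ) := by push_cast; ring
        _ ≤ pochhammerCoeff Δ (2 * k) := div_le hΔ (2 * k)
  exact Real.not_summable_natCast_inv ((summable_mul_left_iff (by positivity)).1 harmonic)

end pochhammerCoeff

theorem gamma_mul_gamma_div_eq_pochhammerCoeff_mul (Δ : ℝ) (m n : ℕ) :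
    Real.Gamma (Δ + m) * Real.Gamma (Δ + n) / (m ! * n ! * Real.Gamma Δ ^ 2) =
      pochhammerCoeff Δ m * pochhammerCoeff Δ n := by
  unfold pochhammerCoeff
  ring

end

theorem stmt_19_general (Δ : ℝ) (hΔ : 0 < Δ) (r s : ℝ)
    (h : r = 1 ∨ s = 1) :
    ¬ Summable (fun p : ℕ × ℕ =>
      (1 + (-1 : ℝ) ^ (p.1 + p.2)) *
        (Real.Gamma (Δ + p.1) * Real.Gamma (Δ + p.2) /
          (p.1.factorial * p.2.factorial * Real.Gamma Δ ^ 2)) *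
        r ^ p.1 * s ^ p.2) := by
  intro hsum
  have hc₀ := pochhammerCoeff.zero (Real.Gamma_pos_of_pos hΔ).ne'
  refine pochhammerCoeff.not_summable_even hΔ ((summable_mul_left_iff two_ne_zero).1 ?_)
  rcases h with rfl | rfl
  · refine (hsum.comp_injective (i := fun k : ℕ => (2 * k, 0)) ?_).congr fun k => ?_
    · intro a b hab; simpa using hab
    · norm_num [gamma_mul_gamma_div_eq_pochhammerCoeff_mul, hc₀, pow_mul]
  · refine (hsum.comp_injective (i := fun k : ℕ => (0, 2 * k)) ?_).congr fun k => ?_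
    · intro a b hab; simpa using hab
    · norm_num [gamma_mul_gamma_div_eq_pochhammerCoeff_mul, hc₀, pow_mul]

/-- The radial expansion of the generalized free field four-point function
diverges on the boundary: for `Δ > 0` and `r, s ∈ [0,1]` with `r = 1` or
`s = 1`, the nonnegative double series is not summable. -/
theorem stmt_19 (Δ : ℝ) (hΔ : 0 < Δ) (r s : ℝ)
    (hr : r ∈ Set.Icc (0 : ℝ) 1) (hs : s ∈ Set.Icc (0 : ℝ) 1)
    (h : r = 1 ∨ s = 1) :
    ¬ Summable (fun p : ℕ × ℕ =>
      (1 + (-1 : ℝ) ^ (p.1 + p.2)) *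
        (Real.Gamma (Δ + p.1) * Real.Gamma (Δ + p.2) /
          (p.1.factorial * p.2.factorial * Real.Gamma Δ ^ 2)) *
        r ^ p.1 * s ^ p.2) :=
  stmt_19_general Δ hΔ r s h
end
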